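/- arXiv:1912.12024 — 3 statements merged into one kernel-verified Lean document; each statement's English description precedes it below -/
import Mathlib

section
/- Let θ = θ_{ij}^k dz^i ⊗ dz^j ⊗ ∂/∂z^k be a smooth (1,0)-form valued endomorphism of the holomorphic tangent bundle over an open set of C^n with Hermitian metric (h_{i\bar{j}}). Define the connection with coefficients Γ_{ij}^k + θ_{ij}^k in the ∂/∂z^i directions and -h_{j\bar{q}} h^{k\bar{p}} conj(θ_{ip}^q) in the ∂/∂\bar{z}^i directions. Then its (1,1)-curvature component is R^θ_{i\bar{j}k\bar{ℓ}} = Θ_{i\bar{j}k\bar{ℓ}} - ( h_{k\bar{p}} ∂conj(θ_{jℓ}^p)/∂z^i + h_{p\bar{ℓ}} ∂θ_{ik}^p/∂\bar{z}^j ) + ( θ_{ik}^p conj(θ_{jℓ}^q) h_{p\bar{q}} - h^{m\bar{n}} θ_{im}^p conj(θ_{jn}^q) h_{p\bar{ℓ}} h_{k\bar{q}} ). -/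
noncomputable section

open Complex

/-- Wirtinger derivative `∂f/∂z^i` at `x`, computed within the set `U`. -/
def wd {n : ℕ} (U : Set (Fin n → ℂ)) (i : Fin n) (f : (Fin n → ℂ) → ℂ)
    (x : Fin n → ℂ) : ℂ :=
  (1/2) * (fderivWithin ℝ f U x (Pi.single i 1)
    - Complex.I * fderivWithin ℝ f U x (Pi.single i Complex.I))

/-- Wirtinger derivative `∂f/∂z̄^i` at `x`, computed within the set `U`. -/
def wdb {n : ℕ} (U : Set (Fin n → ℂ)) (i : Fin n) (f : (Fin n → ℂ) → ℂ)
    (x : Fin n → ℂ) : ℂ :=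
  (1/2) * (fderivWithin ℝ f U x (Pi.single i 1)
    + Complex.I * fderivWithin ℝ f U x (Pi.single i Complex.I))

/-- Christoffel symbols of the Chern connection: `Γ_{ij}^k = h^{k\bar ℓ} ∂h_{j\bar ℓ}/∂z^i`.
Here `h x i j` stands for `h_{i\bar j}(x)` and `hi x k ℓ` for `h^{k\bar ℓ}(x)`. -/
def Gam {n : ℕ} (U : Set (Fin n → ℂ)) (h hi : (Fin n → ℂ) → Fin n → Fin n → ℂ)
    (x : Fin n → ℂ) (i j k : Fin n) : ℂ :=
  ∑ l, hi x k l * wd U i (fun y => h y j l) x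

/-- Torsion of the Chern connection: `T_{ij}^k = Γ_{ij}^k - Γ_{ji}^k`. -/
def Tor {n : ℕ} (U : Set (Fin n → ℂ)) (h hi : (Fin n → ℂ) → Fin n → Fin n → ℂ)
    (x : Fin n → ℂ) (i j k : Fin n) : ℂ :=
  Gam U h hi x i j k - Gam U h hi x j i k

/-- Chern curvature
`Θ_{i\bar j k\bar ℓ} = -∂²h_{k\bar ℓ}/∂z^i∂z̄^j + h^{p\bar q} (∂h_{p\bar ℓ}/∂z̄^j)(∂h_{k\bar q}/∂z^i)`. -/
def Th {n : ℕ} (U : Set (Fin n → ℂ)) (h hi : (Fin n → ℂ) → Fin n → Fin n → ℂ)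
    (x : Fin n → ℂ) (i j k l : Fin n) : ℂ :=
  -(wd U i (fun y => wdb U j (fun w => h w k l) y) x)
    + ∑ p, ∑ q, hi x p q * wdb U j (fun y => h y p l) x * wd U i (fun y => h y k q) x


/-- Coefficient in the `∂/∂z^i` directions of the θ-modified Chern connection. -/
def Ath {n : ℕ} (U : Set (Fin n → ℂ)) (h hi : (Fin n → ℂ) → Fin n → Fin n → ℂ)
    (θ : (Fin n → ℂ) → Fin n → Fin n → Fin n → ℂ)
    (x : Fin n → ℂ) (i j k : Fin n) : ℂ :=
  Gam U h hi x i j k + θ x i j k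

/-- Coefficient in the `∂/∂z̄^i` directions: `-h_{j\bar q} h^{k\bar p} conj(θ_{ip}^q)`. -/
def Bth {n : ℕ} (h hi : (Fin n → ℂ) → Fin n → Fin n → ℂ)
    (θ : (Fin n → ℂ) → Fin n → Fin n → Fin n → ℂ)
    (x : Fin n → ℂ) (i j k : Fin n) : ℂ :=
  -∑ p, ∑ q, h x j q * hi x k p * (starRingEnd ℂ) (θ x i p q)

/-- Curvature `R^θ_{i\bar j k}^ℓ` of the θ-modified Chern connection. -/
def Rth {n : ℕ} (U : Set (Fin n → ℂ)) (h hi : (Fin n → ℂ) → Fin n → Fin n → ℂ)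
    (θ : (Fin n → ℂ) → Fin n → Fin n → Fin n → ℂ)
    (x : Fin n → ℂ) (i j k l : Fin n) : ℂ :=
  -(wdb U j (fun y => Ath U h hi θ y i k l) x
    - wd U i (fun y => Bth h hi θ y j k l) x
    + (∑ s, Ath U h hi θ x i k s * Bth h hi θ x j s l)
    - ∑ s, Bth h hi θ x j k s * Ath U h hi θ x i s l)


open scoped ContDiff

namespace TC

variable {n : ℕ} {U : Set (Fin n → ℂ)} {f g : (Fin n → ℂ) → ℂ} {x : Fin n → ℂ} {i j : Fin n}

theorem wd_congr (hfg : Set.EqOn f g U) (hx : x ∈ U) : wd U i f x = wd U i g x := by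
  unfold wd; rw [fderivWithin_congr hfg (hfg hx)]

theorem wdb_congr (hfg : Set.EqOn f g U) (hx : x ∈ U) : wdb U i f x = wdb U i g x := by
  unfold wdb; rw [fderivWithin_congr hfg (hfg hx)]

theorem wd_const (hU : IsOpen U) (hx : x ∈ U) {c : ℂ} : wd U i (fun _ => c) x = 0 := by
  simp [wd, fderivWithin_const_apply c]

theorem wdb_const (hU : IsOpen U) (hx : x ∈ U) {c : ℂ} : wdb U i (fun _ => c) x = 0 := by
  simp [wdb, fderivWithin_const_apply c]

theorem wd_add (hU : IsOpen U) (hx : x ∈ U) (hf : DifferentiableWithinAt ℝ f U x)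
    (hg : DifferentiableWithinAt ℝ g U x) :
    wd U i (fun y => f y + g y) x = wd U i f x + wd U i g x := by
  unfold wd
  rw [fderivWithin_fun_add (hU.uniqueDiffOn x hx) hf hg]
  simp; ring

theorem wdb_add (hU : IsOpen U) (hx : x ∈ U) (hf : DifferentiableWithinAt ℝ f U x)
    (hg : DifferentiableWithinAt ℝ g U x) :
    wdb U i (fun y => f y + g y) x = wdb U i f x + wdb U i g x := by
  unfold wdb
  rw [fderivWithin_fun_add (hU.uniqueDiffOn x hx) hf hg]
  simp; ring

theorem wd_mul (hU : IsOpen U) (hx : x ∈ U) (hf : DifferentiableWithinAt ℝ f U x)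
    (hg : DifferentiableWithinAt ℝ g U x) :
    wd U i (fun y => f y * g y) x = wd U i f x * g x + f x * wd U i g x := by
  unfold wd
  rw [fderivWithin_fun_mul (hU.uniqueDiffOn x hx) hf hg]
  simp [smul_eq_mul]; ring

theorem wdb_mul (hU : IsOpen U) (hx : x ∈ U) (hf : DifferentiableWithinAt ℝ f U x)
    (hg : DifferentiableWithinAt ℝ g U x) :
    wdb U i (fun y => f y * g y) x = wdb U i f x * g x + f x * wdb U i g x := by
  unfold wdb
  rw [fderivWithin_fun_mul (hU.uniqueDiffOn x hx) hf hg]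
  simp [smul_eq_mul]; ring

theorem wd_sum {ι : Type*} {s : Finset ι} {F : ι → (Fin n → ℂ) → ℂ} (hU : IsOpen U) (hx : x ∈ U)
    (hF : ∀ m ∈ s, DifferentiableWithinAt ℝ (F m) U x) :
    wd U i (fun y => ∑ m ∈ s, F m y) x = ∑ m ∈ s, wd U i (F m) x := by
  unfold wd
  rw [fderivWithin_fun_sum (hU.uniqueDiffOn x hx) hF]
  simp only [ContinuousLinearMap.coe_sum', Finset.sum_apply, Finset.mul_sum,
    ← Finset.sum_sub_distrib]

theorem wdb_sum {ι : Type*} {s : Finset ι} {F : ι → (Fin n → ℂ) → ℂ} (hU : IsOpen U) (hx : x ∈ U)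
    (hF : ∀ m ∈ s, DifferentiableWithinAt ℝ (F m) U x) :
    wdb U i (fun y => ∑ m ∈ s, F m y) x = ∑ m ∈ s, wdb U i (F m) x := by
  unfold wdb
  rw [fderivWithin_fun_sum (hU.uniqueDiffOn x hx) hF]
  simp only [ContinuousLinearMap.coe_sum', Finset.sum_apply, Finset.mul_sum,
    ← Finset.sum_add_distrib]

theorem conj_fderivWithin (hU : IsOpen U) (hx : x ∈ U) :
    fderivWithin ℝ (fun y => (starRingEnd ℂ) (f y)) U x
      = (Complex.conjCLE : ℂ ≃L[ℝ] ℂ).toContinuousLinearMap.comp (fderivWithin ℝ f U x) :=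
  Complex.conjCLE.comp_fderivWithin (hU.uniqueDiffOn x hx)

theorem wd_conj (hU : IsOpen U) (hx : x ∈ U) :
    wd U i (fun y => (starRingEnd ℂ) (f y)) x = (starRingEnd ℂ) (wdb U i f x) := by
  unfold wd wdb
  rw [conj_fderivWithin hU hx]
  simp [Complex.conj_I, map_ofNat]
  ring

theorem wdb_conj (hU : IsOpen U) (hx : x ∈ U) :
    wdb U i (fun y => (starRingEnd ℂ) (f y)) x = (starRingEnd ℂ) (wd U i f x) := by
  unfold wd wdb
  rw [conj_fderivWithin hU hx]
  simp [Complex.conj_I, map_ofNat]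


theorem smOn_conj (hf : ContDiffOn ℝ ∞ f U) :
    ContDiffOn ℝ ∞ (fun y => (starRingEnd ℂ) (f y)) U :=
  (Complex.conjCLE : ℂ ≃L[ℝ] ℂ).toContinuousLinearMap.contDiff.comp_contDiffOn hf

theorem smOn_wd (hU : IsOpen U) (hf : ContDiffOn ℝ ∞ f U) :
    ContDiffOn ℝ ∞ (wd U i f) U := by
  have h1 : ContDiffOn ℝ ∞ (fderivWithin ℝ f U) U :=
    hf.fderivWithin hU.uniqueDiffOn (by simp)
  have h2 : ContDiffOn ℝ ∞ (fun y => fderivWithin ℝ f U y (Pi.single i 1)) U :=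
    h1.clm_apply contDiffOn_const
  have h3 : ContDiffOn ℝ ∞ (fun y => fderivWithin ℝ f U y (Pi.single i Complex.I)) U :=
    h1.clm_apply contDiffOn_const
  unfold wd
  exact contDiffOn_const.mul (h2.sub (contDiffOn_const.mul h3))

theorem smOn_wdb (hU : IsOpen U) (hf : ContDiffOn ℝ ∞ f U) :
    ContDiffOn ℝ ∞ (wdb U i f) U := by
  have h1 : ContDiffOn ℝ ∞ (fderivWithin ℝ f U) U :=
    hf.fderivWithin hU.uniqueDiffOn (by simp)
  have h2 : ContDiffOn ℝ ∞ (fun y => fderivWithin ℝ f U y (Pi.single i 1)) U :=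
    h1.clm_apply contDiffOn_const
  have h3 : ContDiffOn ℝ ∞ (fun y => fderivWithin ℝ f U y (Pi.single i Complex.I)) U :=
    h1.clm_apply contDiffOn_const
  unfold wdb
  exact contDiffOn_const.mul (h2.add (contDiffOn_const.mul h3))

theorem smOn_prod {ι : Type*} {s : Finset ι} {F : ι → (Fin n → ℂ) → ℂ}
    (h : ∀ m ∈ s, ContDiffOn ℝ ∞ (F m) U) :
    ContDiffOn ℝ ∞ (fun y => ∏ m ∈ s, F m y) U := by
  classical
  induction s using Finset.induction with
  | empty => simpa using contDiffOn_const
  | @insert a s hne ih =>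
    simp only [Finset.prod_insert hne]
    exact (h a (Finset.mem_insert_self a s)).mul
      (ih fun m hm => h m (Finset.mem_insert_of_mem hm))

theorem smOn_hi {h hi : (Fin n → ℂ) → Fin n → Fin n → ℂ} (hU : IsOpen U)
    (hsm : ∀ i j, ContDiffOn ℝ ∞ (fun y => h y i j) U)
    (hinv1 : ∀ x ∈ U, ∀ j k, ∑ l, h x j l * hi x k l = if j = k then 1 else 0)
    (k l : Fin n) : ContDiffOn ℝ ∞ (fun y => hi y k l) U := by
  classical
  set M : (Fin n → ℂ) → Matrix (Fin n) (Fin n) ℂ := fun y => Matrix.of (fun a b => h y a b)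
    with hM
  have key : ∀ x ∈ U, M x * Matrix.of (fun a b => hi x b a) = 1 := by
    intro x hx
    ext a b
    simp only [Matrix.mul_apply, Matrix.of_apply, Matrix.one_apply, hM]
    exact hinv1 x hx a b
  have det_ne : ∀ x ∈ U, (M x).det ≠ 0 := by
    intro x hx
    have h1 : (M x).det * (Matrix.of (fun a b => hi x b a)).det = 1 := by
      rw [← Matrix.det_mul, key x hx, Matrix.det_one]
    exact left_ne_zero_of_mul_eq_one h1
  have hi_eq : ∀ x ∈ U, hi x k l = ((M x).det)⁻¹ * (M x).adjugate l k := by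
    intro x hx
    have h1 : (M x)⁻¹ = Matrix.of (fun a b => hi x b a) := Matrix.inv_eq_right_inv (key x hx)
    have h2 : hi x k l = (M x)⁻¹ l k := by rw [h1]; rfl
    rw [h2, Matrix.inv_def, Matrix.smul_apply, Ring.inverse_eq_inv', smul_eq_mul]
  have hdet : ContDiffOn ℝ ∞ (fun y => (M y).det) U := by
    simp only [Matrix.det_apply']
    exact ContDiffOn.sum fun σ _ => contDiffOn_const.mul
      (smOn_prod fun m _ => hsm (σ m) m)
  have hadj : ContDiffOn ℝ ∞ (fun y => (M y).adjugate l k) U := by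
    simp only [Matrix.adjugate_apply, Matrix.det_apply']
    refine ContDiffOn.sum fun σ _ => contDiffOn_const.mul (smOn_prod fun m _ => ?_)
    by_cases hc : σ m = k
    · simp only [Matrix.updateRow_apply, hc, if_pos rfl]
      exact contDiffOn_const
    · simp only [Matrix.updateRow_apply, if_neg hc]
      exact hsm (σ m) m
  exact ((hdet.inv det_ne).mul hadj).congr fun x hx => hi_eq x hx

theorem two_le_inf : (2:WithTop ℕ∞) ≤ ∞ := by
  rw [show (2:WithTop ℕ∞) = ((2:ℕ∞) : WithTop ℕ∞) by norm_cast]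
  exact WithTop.coe_le_coe.mpr le_top

theorem oneone_le_inf : (1:WithTop ℕ∞) + 1 ≤ ∞ := by
  rw [show (1:WithTop ℕ∞) + 1 = ((2:ℕ∞) : WithTop ℕ∞) by norm_cast]
  exact WithTop.coe_le_coe.mpr le_top

theorem dwa (hf : ContDiffOn ℝ ∞ f U) (hx : x ∈ U) : DifferentiableWithinAt ℝ f U x :=
  (hf x hx).differentiableWithinAt (by simp)

theorem wd_eq_fderiv (hU : IsOpen U) (hx : x ∈ U) :
    wd U i f x = 1/2 * (fderiv ℝ f x (Pi.single i 1)
      - Complex.I * fderiv ℝ f x (Pi.single i Complex.I)) := by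
  unfold wd; rw [fderivWithin_of_isOpen hU hx]

theorem wdb_eq_fderiv (hU : IsOpen U) (hx : x ∈ U) :
    wdb U i f x = 1/2 * (fderiv ℝ f x (Pi.single i 1)
      + Complex.I * fderiv ℝ f x (Pi.single i Complex.I)) := by
  unfold wdb; rw [fderivWithin_of_isOpen hU hx]

theorem wd_wdb_comm (hU : IsOpen U) (hx : x ∈ U) (hf : ContDiffOn ℝ ∞ f U) :
    wd U i (fun y => wdb U j f y) x = wdb U j (fun y => wd U i f y) x := by
  classical
  have hfa : ContDiffAt ℝ ∞ f x := (hf x hx).contDiffAt (hU.mem_nhds hx)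
  have hD1 : ContDiffAt ℝ 1 (fderiv ℝ f) x :=
    hfa.fderiv_right oneone_le_inf
  have hD : DifferentiableAt ℝ (fderiv ℝ f) x := hD1.differentiableAt one_ne_zero
  have hDU : ∀ y ∈ U, DifferentiableAt ℝ (fderiv ℝ f) y := by
    intro y hy
    exact (((hf y hy).contDiffAt (hU.mem_nhds hy)).fderiv_right
      oneone_le_inf).differentiableAt one_ne_zero
  have hsym : ∀ v w, fderiv ℝ (fderiv ℝ f) x v w = fderiv ℝ (fderiv ℝ f) x w v :=
    (hfa.isSymmSndFDerivAt (by rw [minSmoothness_of_isRCLikeNormedField]; exact two_le_inf)).eq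
  have hDv : ∀ v w, fderiv ℝ (fun y => fderiv ℝ f y v) x w
      = fderiv ℝ (fderiv ℝ f) x w v := by
    intro v w
    rw [fderiv_clm_apply hD (differentiableAt_const v)]
    simp
  -- abbreviations
  set e1 : Fin n → ℂ := Pi.single i 1
  set e2 : Fin n → ℂ := Pi.single i Complex.I
  set f1 : Fin n → ℂ := Pi.single j 1
  set f2 : Fin n → ℂ := Pi.single j Complex.I
  have hA : ∀ v : Fin n → ℂ, DifferentiableWithinAt ℝ (fun y => fderiv ℝ f y v) U x :=
    fun v => (hD.clm_apply (differentiableAt_const v)).differentiableWithinAt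
  -- compute LHS
  have hL : wd U i (fun y => wdb U j f y) x
      = 1/2 * (1/2) * ((fderiv ℝ (fderiv ℝ f) x e1 f1 + Complex.I * fderiv ℝ (fderiv ℝ f) x e1 f2)
        - Complex.I * (fderiv ℝ (fderiv ℝ f) x e2 f1 + Complex.I * fderiv ℝ (fderiv ℝ f) x e2 f2)) := by
    have hcg : wd U i (fun y => wdb U j f y) x
        = wd U i (fun y => 1/2 * (fderiv ℝ f y f1 + Complex.I * fderiv ℝ f y f2)) x := by
      apply wd_congr (fun y hy => ?_) hx
      exact wdb_eq_fderiv hU hy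
    rw [hcg]
    rw [wd_mul (g := fun y => fderiv ℝ f y f1 + Complex.I * fderiv ℝ f y f2) hU hx (differentiableWithinAt_const _)
      ((hA f1).add ((hA f2).const_mul _)), wd_const hU hx,
      wd_add hU hx (hA f1) ((hA f2).const_mul _),
      wd_mul hU hx (differentiableWithinAt_const _) (hA f2), wd_const hU hx]
    rw [wd_eq_fderiv hU hx, wd_eq_fderiv hU hx]
    rw [hDv f1 e1, hDv f1 e2, hDv f2 e1, hDv f2 e2]
    ring
  have hR : wdb U j (fun y => wd U i f y) x
      = 1/2 * (1/2) * ((fderiv ℝ (fderiv ℝ f) x f1 e1 - Complex.I * fderiv ℝ (fderiv ℝ f) x f1 e2)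
        + Complex.I * (fderiv ℝ (fderiv ℝ f) x f2 e1 - Complex.I * fderiv ℝ (fderiv ℝ f) x f2 e2)) := by
    have hcg : wdb U j (fun y => wd U i f y) x
        = wdb U j (fun y => 1/2 * (fderiv ℝ f y e1 - Complex.I * fderiv ℝ f y e2)) x := by
      apply wdb_congr (fun y hy => ?_) hx
      exact wd_eq_fderiv hU hy
    rw [hcg]
    rw [wdb_mul (g := fun y => fderiv ℝ f y e1 - Complex.I * fderiv ℝ f y e2) hU hx (differentiableWithinAt_const _)
      ((hA e1).sub ((hA e2).const_mul _)), wdb_const hU hx]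
    have hsub : wdb U j (fun y => fderiv ℝ f y e1 - Complex.I * fderiv ℝ f y e2) x
        = wdb U j (fun y => fderiv ℝ f y e1) x
          - Complex.I * wdb U j (fun y => fderiv ℝ f y e2) x := by
      have := wdb_add (i := j) (g := fun y => -(Complex.I * fderiv ℝ f y e2)) hU hx (hA e1) (((hA e2).const_mul Complex.I).neg)
      simp only [← sub_eq_add_neg] at this
      rw [show (fun y => fderiv ℝ f y e1 - Complex.I * fderiv ℝ f y e2)
          = (fun y => fderiv ℝ f y e1 + -(Complex.I * fderiv ℝ f y e2)) from by
        funext y; ring] at *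
      rw [this]
      have hneg : wdb U j (fun y => -(Complex.I * fderiv ℝ f y e2)) x
          = -(Complex.I * wdb U j (fun y => fderiv ℝ f y e2) x) := by
        have h2 := wdb_mul (i := j) hU hx (differentiableWithinAt_const (-Complex.I)) (hA e2)
        rw [wdb_const hU hx] at h2
        calc wdb U j (fun y => -(Complex.I * fderiv ℝ f y e2)) x
            = wdb U j (fun y => (-Complex.I) * fderiv ℝ f y e2) x := by
              congr 1; funext y; ring
          _ = -(Complex.I * wdb U j (fun y => fderiv ℝ f y e2) x) := by rw [h2]; ring
      rw [hneg]; ring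
    rw [hsub]
    rw [wdb_eq_fderiv hU hx, wdb_eq_fderiv hU hx]
    rw [hDv e1 f1, hDv e1 f2, hDv e2 f1, hDv e2 f2]
    ring
  rw [hL, hR, hsym e1 f1, hsym e1 f2, hsym e2 f1, hsym e2 f2]
  ring

theorem wd_neg (hU : IsOpen U) (hx : x ∈ U) :
    wd U i (fun y => -f y) x = -wd U i f x := by
  unfold wd
  rw [fderivWithin_fun_neg (hU.uniqueDiffOn x hx)]
  simp; ring

theorem wdb_neg (hU : IsOpen U) (hx : x ∈ U) :
    wdb U i (fun y => -f y) x = -wdb U i f x := by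
  unfold wdb
  rw [fderivWithin_fun_neg (hU.uniqueDiffOn x hx)]
  simp; ring

theorem wd_mul3 {k : (Fin n → ℂ) → ℂ} (hU : IsOpen U) (hx : x ∈ U)
    (hf : DifferentiableWithinAt ℝ f U x) (hg : DifferentiableWithinAt ℝ g U x)
    (hk : DifferentiableWithinAt ℝ k U x) :
    wd U i (fun y => f y * g y * k y) x
      = wd U i f x * g x * k x + f x * wd U i g x * k x + f x * g x * wd U i k x := by
  rw [wd_mul (f := fun y => f y * g y) hU hx (hf.mul hg) hk, wd_mul hU hx hf hg]
  ring

theorem wdb_mul3 {k : (Fin n → ℂ) → ℂ} (hU : IsOpen U) (hx : x ∈ U)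
    (hf : DifferentiableWithinAt ℝ f U x) (hg : DifferentiableWithinAt ℝ g U x)
    (hk : DifferentiableWithinAt ℝ k U x) :
    wdb U i (fun y => f y * g y * k y) x
      = wdb U i f x * g x * k x + f x * wdb U i g x * k x + f x * g x * wdb U i k x := by
  rw [wdb_mul (f := fun y => f y * g y) hU hx (hf.mul hg) hk, wdb_mul hU hx hf hg]
  ring

theorem wd_hi_contract {h hi : (Fin n → ℂ) → Fin n → Fin n → ℂ} (hU : IsOpen U) (hx : x ∈ U)
    (hsm : ∀ a b, ContDiffOn ℝ ∞ (fun y => h y a b) U)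
    (hism : ∀ a b, ContDiffOn ℝ ∞ (fun y => hi y a b) U)
    (hinv2 : ∀ x ∈ U, ∀ l m, ∑ k, hi x k l * h x k m = if l = m then 1 else 0)
    (p l : Fin n) :
    ∑ m, wd U i (fun y => hi y m p) x * h x m l
      = -∑ m, hi x m p * wd U i (fun y => h y m l) x := by
  have h0 : wd U i (fun y => ∑ m, hi y m p * h y m l) x = 0 := by
    rw [wd_congr (g := fun _ => if p = l then (1:ℂ) else 0) (fun y hy => hinv2 y hy p l) hx,
      wd_const hU hx]
  rw [wd_sum (F := fun m y => hi y m p * h y m l) hU hx (fun m _ => (dwa (hism m p) hx).mul (dwa (hsm m l) hx))] at h0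
  rw [Finset.sum_congr rfl (fun m (_ : m ∈ Finset.univ) =>
    wd_mul hU hx (dwa (hism m p) hx) (dwa (hsm m l) hx)), Finset.sum_add_distrib] at h0
  linear_combination h0

theorem wdb_hi_contract {h hi : (Fin n → ℂ) → Fin n → Fin n → ℂ} (hU : IsOpen U) (hx : x ∈ U)
    (hsm : ∀ a b, ContDiffOn ℝ ∞ (fun y => h y a b) U)
    (hism : ∀ a b, ContDiffOn ℝ ∞ (fun y => hi y a b) U)
    (hinv2 : ∀ x ∈ U, ∀ l m, ∑ k, hi x k l * h x k m = if l = m then 1 else 0)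
    (p l : Fin n) :
    ∑ m, wdb U i (fun y => hi y m p) x * h x m l
      = -∑ m, hi x m p * wdb U i (fun y => h y m l) x := by
  have h0 : wdb U i (fun y => ∑ m, hi y m p * h y m l) x = 0 := by
    rw [wdb_congr (g := fun _ => if p = l then (1:ℂ) else 0) (fun y hy => hinv2 y hy p l) hx,
      wdb_const hU hx]
  rw [wdb_sum (F := fun m y => hi y m p * h y m l) hU hx (fun m _ => (dwa (hism m p) hx).mul (dwa (hsm m l) hx))] at h0
  rw [Finset.sum_congr rfl (fun m (_ : m ∈ Finset.univ) =>
    wdb_mul hU hx (dwa (hism m p) hx) (dwa (hsm m l) hx)), Finset.sum_add_distrib] at h0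
  linear_combination h0
end TC


/-- the (1,1)-curvature of the θ-modified Chern connection is
`R^θ_{i\bar j k\bar ℓ} = Θ_{i\bar j k\bar ℓ}
  - (h_{k\bar p} ∂conj(θ_{jℓ}^p)/∂z^i + h_{p\bar ℓ} ∂θ_{ik}^p/∂z̄^j)
  + (θ_{ik}^p conj(θ_{jℓ}^q) h_{p\bar q}
     - h^{m\bar n} θ_{im}^p conj(θ_{jn}^q) h_{p\bar ℓ} h_{k\bar q})`. -/
theorem theta_connection_curvature_formula
    {n : ℕ} (U : Set (Fin n → ℂ)) (hU : IsOpen U)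
    (h hi : (Fin n → ℂ) → Fin n → Fin n → ℂ)
    (hsm : ∀ i j, ContDiffOn ℝ (⊤ : ℕ∞) (fun y => h y i j) U)
    (hherm : ∀ x ∈ U, ∀ i j, h x i j = (starRingEnd ℂ) (h x j i))
    (hpos : ∀ x ∈ U, ∀ v : Fin n → ℂ, v ≠ 0 →
      0 < (∑ i, ∑ j, h x i j * v i * (starRingEnd ℂ) (v j)).re)
    (hinv1 : ∀ x ∈ U, ∀ j k, ∑ l, h x j l * hi x k l = if j = k then 1 else 0)
    (hinv2 : ∀ x ∈ U, ∀ l m, ∑ k, hi x k l * h x k m = if l = m then 1 else 0)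
    (θ : (Fin n → ℂ) → Fin n → Fin n → Fin n → ℂ)
    (hθsm : ∀ i j k, ContDiffOn ℝ (⊤ : ℕ∞) (fun y => θ y i j k) U) :
    ∀ x ∈ U, ∀ i j k l,
      (∑ m, Rth U h hi θ x i j k m * h x m l)
        = Th U h hi x i j k l
          - ((∑ p, h x k p * wd U i (fun y => (starRingEnd ℂ) (θ y j l p)) x)
             + ∑ p, h x p l * wdb U j (fun y => θ y i k p) x)
          + ((∑ p, ∑ q, θ x i k p * (starRingEnd ℂ) (θ x j l q) * h x p q)
             - ∑ m, ∑ s, ∑ p, ∑ q, hi x m s * θ x i m p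
                 * (starRingEnd ℂ) (θ x j s q) * h x p l * h x k q) := by
  intro x hx i j k l
  -- smoothness upgrades
  have hsm' : ∀ a b, ContDiffOn ℝ ∞ (fun y => h y a b) U := fun a b => (hsm a b).of_le (by simp)
  have hθ' : ∀ a b c, ContDiffOn ℝ ∞ (fun y => θ y a b c) U :=
    fun a b c => (hθsm a b c).of_le (by simp)
  have hism : ∀ a b, ContDiffOn ℝ ∞ (fun y => hi y a b) U := TC.smOn_hi hU hsm' hinv1
  have hθc : ∀ a b c, ContDiffOn ℝ ∞ (fun y => (starRingEnd ℂ) (θ y a b c)) U :=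
    fun a b c => TC.smOn_conj (hθ' a b c)
  -- differentiability at x
  have dh : ∀ a b, DifferentiableWithinAt ℝ (fun y => h y a b) U x :=
    fun a b => TC.dwa (hsm' a b) hx
  have dhi : ∀ a b, DifferentiableWithinAt ℝ (fun y => hi y a b) U x :=
    fun a b => TC.dwa (hism a b) hx
  have dθ : ∀ a b c, DifferentiableWithinAt ℝ (fun y => θ y a b c) U x :=
    fun a b c => TC.dwa (hθ' a b c) hx
  have dθc : ∀ a b c, DifferentiableWithinAt ℝ (fun y => (starRingEnd ℂ) (θ y a b c)) U x :=
    fun a b c => TC.dwa (hθc a b c) hx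
  have dwdh : ∀ (a b c : Fin n), DifferentiableWithinAt ℝ
      (fun y => wd U a (fun w => h w b c) y) U x :=
    fun a b c => TC.dwa (TC.smOn_wd hU (hsm' b c)) hx
  have hGamSm : ∀ a b c, ContDiffOn ℝ ∞ (fun y => Gam U h hi y a b c) U := by
    intro a b c
    have he : (fun y => Gam U h hi y a b c)
        = fun y => ∑ t, hi y c t * wd U a (fun w => h w b t) y := rfl
    rw [he]
    exact ContDiffOn.sum fun t _ => (hism c t).mul (TC.smOn_wd hU (hsm' b t))
  -- collapse helpers
  have collapse2 : ∀ (f : Fin n → Fin n → ℂ) (l₀ : Fin n),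
      (∑ p, ∑ q, (if p = l₀ then (1:ℂ) else 0) * f p q) = ∑ q, f l₀ q := by
    intro f l₀
    rw [Finset.sum_eq_single l₀]
    · simp
    · intro b _ hb; simp [hb]
    · intro hb; exact absurd (Finset.mem_univ l₀) hb
  have collapse1 : ∀ (f : Fin n → ℂ) (l₀ : Fin n),
      (∑ p, (if p = l₀ then (1:ℂ) else 0) * f p) = f l₀ := by
    intro f l₀
    rw [Finset.sum_eq_single l₀]
    · simp
    · intro b _ hb; simp [hb]
    · intro hb; exact absurd (Finset.mem_univ l₀) hb
  -- Γ-contraction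
  have hGamContr : ∀ a b : Fin n,
      ∑ t, Gam U h hi x i a t * h x t b = wd U i (fun y => h y a b) x := by
    intro a b
    have he : ∀ t : Fin n, Gam U h hi x i a t
        = ∑ r, hi x t r * wd U i (fun w => h w a r) x := fun t => rfl
    calc ∑ t, Gam U h hi x i a t * h x t b
        = ∑ t, ∑ r, hi x t r * wd U i (fun w => h w a r) x * h x t b := by
          refine Finset.sum_congr rfl fun t _ => ?_
          rw [he t, Finset.sum_mul]
      _ = ∑ r, ∑ t, hi x t r * wd U i (fun w => h w a r) x * h x t b := Finset.sum_comm
      _ = ∑ r, (if r = b then (1:ℂ) else 0) * wd U i (fun w => h w a r) x := by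
          refine Finset.sum_congr rfl fun r _ => ?_
          rw [← hinv2 x hx r b, Finset.sum_mul]
          exact Finset.sum_congr rfl fun t _ => by ring
      _ = wd U i (fun y => h y a b) x := collapse1 _ b
  -- ==================== Have A ====================
  have hW1 : ∀ m, wdb U j (fun y => Ath U h hi θ y i k m) x
      = wdb U j (fun y => Gam U h hi y i k m) x + wdb U j (fun y => θ y i k m) x := by
    intro m
    have he : (fun y => Ath U h hi θ y i k m)
        = fun y => Gam U h hi y i k m + θ y i k m := rfl
    rw [he, TC.wdb_add hU hx (TC.dwa (hGamSm i k m) hx) (dθ i k m)]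
  -- generic swap helper
  have swap3 : ∀ (F : Fin n → Fin n → Fin n → ℂ),
      (∑ a, ∑ b, ∑ c, F a b c) = ∑ b, ∑ c, ∑ a, F a b c := by
    intro F
    rw [Finset.sum_comm]
    exact Finset.sum_congr rfl fun b _ => Finset.sum_comm
  -- ==================== T1 ====================
  have hGexp : ∀ m, wdb U j (fun y => Gam U h hi y i k m) x
      = ∑ t, (wdb U j (fun y => hi y m t) x * wd U i (fun w => h w k t) x
        + hi x m t * wdb U j (fun y => wd U i (fun w => h w k t) y) x) := by
    intro m
    have he : (fun y => Gam U h hi y i k m)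
        = fun y => ∑ t, hi y m t * wd U i (fun w => h w k t) y := rfl
    rw [he, TC.wdb_sum (F := fun t y => hi y m t * wd U i (fun w => h w k t) y) hU hx (fun t _ => (dhi m t).mul (dwdh i k t))]
    exact Finset.sum_congr rfl fun t _ => TC.wdb_mul hU hx (dhi m t) (dwdh i k t)
  have T1 : ∑ m, wdb U j (fun y => Gam U h hi y i k m) x * h x m l
      = wdb U j (fun y => wd U i (fun w => h w k l) y) x
        - ∑ p, ∑ q, hi x p q * wdb U j (fun y => h y p l) x * wd U i (fun y => h y k q) x := by
    calc ∑ m, wdb U j (fun y => Gam U h hi y i k m) x * h x m l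
        = ∑ m, ∑ t, (wdb U j (fun y => hi y m t) x * h x m l * wd U i (fun w => h w k t) x
            + hi x m t * h x m l * wdb U j (fun y => wd U i (fun w => h w k t) y) x) := by
          refine Finset.sum_congr rfl fun m _ => ?_
          rw [hGexp m, Finset.sum_mul]
          exact Finset.sum_congr rfl fun t _ => by ring
      _ = ∑ t, ∑ m, (wdb U j (fun y => hi y m t) x * h x m l * wd U i (fun w => h w k t) x
            + hi x m t * h x m l * wdb U j (fun y => wd U i (fun w => h w k t) y) x) :=
          Finset.sum_comm
      _ = ∑ t, ((∑ m, wdb U j (fun y => hi y m t) x * h x m l) * wd U i (fun w => h w k t) x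
            + (∑ m, hi x m t * h x m l) * wdb U j (fun y => wd U i (fun w => h w k t) y) x) := by
          refine Finset.sum_congr rfl fun t _ => ?_
          rw [Finset.sum_add_distrib, Finset.sum_mul, Finset.sum_mul]
      _ = ∑ t, ((-∑ m, hi x m t * wdb U j (fun y => h y m l) x) * wd U i (fun w => h w k t) x
            + (if t = l then (1:ℂ) else 0)
              * wdb U j (fun y => wd U i (fun w => h w k t) y) x) := by
          refine Finset.sum_congr rfl fun t _ => ?_
          rw [TC.wdb_hi_contract hU hx hsm' hism hinv2 t l, hinv2 x hx t l]
      _ = (-∑ t, ∑ m, hi x m t * wdb U j (fun y => h y m l) x * wd U i (fun w => h w k t) x)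
            + wdb U j (fun y => wd U i (fun w => h w k l) y) x := by
          rw [Finset.sum_add_distrib]
          congr 1
          · rw [← Finset.sum_neg_distrib]
            refine Finset.sum_congr rfl fun t _ => ?_
            rw [neg_mul, Finset.sum_mul]
          · exact collapse1 _ l
      _ = wdb U j (fun y => wd U i (fun w => h w k l) y) x
          - ∑ p, ∑ q, hi x p q * wdb U j (fun y => h y p l) x * wd U i (fun y => h y k q) x := by
          rw [Finset.sum_comm]
          ring
  -- ==================== Have A ====================
  have HA : ∑ m, wdb U j (fun y => Ath U h hi θ y i k m) x * h x m l
      = wdb U j (fun y => wd U i (fun w => h w k l) y) x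
        - (∑ p, ∑ q, hi x p q * wdb U j (fun y => h y p l) x * wd U i (fun y => h y k q) x)
        + ∑ p, h x p l * wdb U j (fun y => θ y i k p) x := by
    calc ∑ m, wdb U j (fun y => Ath U h hi θ y i k m) x * h x m l
        = ∑ m, (wdb U j (fun y => Gam U h hi y i k m) x * h x m l
            + h x m l * wdb U j (fun y => θ y i k m) x) := by
          refine Finset.sum_congr rfl fun m _ => ?_
          rw [hW1 m]; ring
      _ = (∑ m, wdb U j (fun y => Gam U h hi y i k m) x * h x m l)
            + ∑ m, h x m l * wdb U j (fun y => θ y i k m) x := Finset.sum_add_distrib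
      _ = _ := by rw [T1]
  -- ==================== Have B ====================
  have hW2 : ∀ m, wd U i (fun y => Bth h hi θ y j k m) x
      = -∑ p, ∑ q, (wd U i (fun y => h y k q) x * hi x m p * (starRingEnd ℂ) (θ x j p q)
          + h x k q * wd U i (fun y => hi y m p) x * (starRingEnd ℂ) (θ x j p q)
          + h x k q * hi x m p * wd U i (fun y => (starRingEnd ℂ) (θ y j p q)) x) := by
    intro m
    have he : (fun y => Bth h hi θ y j k m)
        = fun y => -∑ p, ∑ q, h y k q * hi y m p * (starRingEnd ℂ) (θ y j p q) := rfl
    rw [he, TC.wd_neg hU hx]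
    congr 1
    rw [TC.wd_sum (F := fun p y => ∑ q, h y k q * hi y m p * (starRingEnd ℂ) (θ y j p q)) hU hx (fun p _ => DifferentiableWithinAt.fun_sum
      fun q _ => ((dh k q).mul (dhi m p)).mul (dθc j p q))]
    refine Finset.sum_congr rfl fun p _ => ?_
    rw [TC.wd_sum (F := fun q y => h y k q * hi y m p * (starRingEnd ℂ) (θ y j p q)) hU hx (fun q _ => ((dh k q).mul (dhi m p)).mul (dθc j p q))]
    exact Finset.sum_congr rfl fun q _ => TC.wd_mul3 hU hx (dh k q) (dhi m p) (dθc j p q)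
  have HB : ∑ m, wd U i (fun y => Bth h hi θ y j k m) x * h x m l
      = -(∑ q, wd U i (fun y => h y k q) x * (starRingEnd ℂ) (θ x j l q))
        + (∑ p, ∑ q, ∑ m, h x k q * hi x m p * wd U i (fun y => h y m l) x
            * (starRingEnd ℂ) (θ x j p q))
        - ∑ p, h x k p * wd U i (fun y => (starRingEnd ℂ) (θ y j l p)) x := by
    calc ∑ m, wd U i (fun y => Bth h hi θ y j k m) x * h x m l
        = ∑ m, ∑ p, ∑ q,
            -((wd U i (fun y => h y k q) x * hi x m p * (starRingEnd ℂ) (θ x j p q)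
              + h x k q * wd U i (fun y => hi y m p) x * (starRingEnd ℂ) (θ x j p q)
              + h x k q * hi x m p * wd U i (fun y => (starRingEnd ℂ) (θ y j p q)) x)
              * h x m l) := by
          refine Finset.sum_congr rfl fun m _ => ?_
          rw [hW2 m, neg_mul, Finset.sum_mul, ← Finset.sum_neg_distrib]
          refine Finset.sum_congr rfl fun p _ => ?_
          rw [Finset.sum_mul, ← Finset.sum_neg_distrib]
      _ = ∑ p, ∑ q, ∑ m,
            -((wd U i (fun y => h y k q) x * hi x m p * (starRingEnd ℂ) (θ x j p q)
              + h x k q * wd U i (fun y => hi y m p) x * (starRingEnd ℂ) (θ x j p q)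
              + h x k q * hi x m p * wd U i (fun y => (starRingEnd ℂ) (θ y j p q)) x)
              * h x m l) := swap3 _
      _ = ∑ p, ∑ q,
            -((if p = l then (1:ℂ) else 0)
                * (wd U i (fun y => h y k q) x * (starRingEnd ℂ) (θ x j p q))
              + (-∑ m, hi x m p * wd U i (fun y => h y m l) x)
                * (h x k q * (starRingEnd ℂ) (θ x j p q))
              + (if p = l then (1:ℂ) else 0)
                * (h x k q * wd U i (fun y => (starRingEnd ℂ) (θ y j p q)) x)) := by
          refine Finset.sum_congr rfl fun p _ => Finset.sum_congr rfl fun q _ => ?_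
          rw [← hinv2 x hx p l, ← TC.wd_hi_contract hU hx hsm' hism hinv2 p l]
          simp only [Finset.sum_mul]
          rw [← Finset.sum_add_distrib, ← Finset.sum_add_distrib, ← Finset.sum_neg_distrib]
          exact Finset.sum_congr rfl fun m _ => by ring
      _ = ∑ p, ∑ q,
            (-((if p = l then (1:ℂ) else 0)
                * (wd U i (fun y => h y k q) x * (starRingEnd ℂ) (θ x j p q)))
              + (∑ m, hi x m p * wd U i (fun y => h y m l) x)
                * (h x k q * (starRingEnd ℂ) (θ x j p q))
              + -((if p = l then (1:ℂ) else 0)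
                * (h x k q * wd U i (fun y => (starRingEnd ℂ) (θ y j p q)) x))) :=
          Finset.sum_congr rfl fun p _ => Finset.sum_congr rfl fun q _ => by ring
      _ = -(∑ p, ∑ q, (if p = l then (1:ℂ) else 0)
              * (wd U i (fun y => h y k q) x * (starRingEnd ℂ) (θ x j p q)))
          + (∑ p, ∑ q, (∑ m, hi x m p * wd U i (fun y => h y m l) x)
              * (h x k q * (starRingEnd ℂ) (θ x j p q)))
          - ∑ p, ∑ q, (if p = l then (1:ℂ) else 0)
              * (h x k q * wd U i (fun y => (starRingEnd ℂ) (θ y j p q)) x) := by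
          simp only [sub_eq_add_neg, Finset.sum_add_distrib, Finset.sum_neg_distrib]
      _ = -(∑ q, wd U i (fun y => h y k q) x * (starRingEnd ℂ) (θ x j l q))
          + (∑ p, ∑ q, ∑ m, h x k q * hi x m p * wd U i (fun y => h y m l) x
              * (starRingEnd ℂ) (θ x j p q))
          - ∑ p, h x k p * wd U i (fun y => (starRingEnd ℂ) (θ y j l p)) x := by
          congr 1
          · congr 1
            · rw [collapse2]
            · refine Finset.sum_congr rfl fun p _ => Finset.sum_congr rfl fun q _ => ?_
              rw [Finset.sum_mul]
              exact Finset.sum_congr rfl fun m _ => by ring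
          · exact collapse2 _ l
  -- ==================== Have C ====================
  have hBcontr : ∀ s, ∑ m, Bth h hi θ x j s m * h x m l
      = -∑ q, h x s q * (starRingEnd ℂ) (θ x j l q) := by
    intro s
    have he : ∀ m : Fin n, Bth h hi θ x j s m
        = -∑ p, ∑ q, h x s q * hi x m p * (starRingEnd ℂ) (θ x j p q) := fun m => rfl
    calc ∑ m, Bth h hi θ x j s m * h x m l
        = ∑ m, ∑ p, ∑ q,
            -((hi x m p * h x m l) * (h x s q * (starRingEnd ℂ) (θ x j p q))) := by
          refine Finset.sum_congr rfl fun m _ => ?_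
          rw [he m, neg_mul, Finset.sum_mul, ← Finset.sum_neg_distrib]
          refine Finset.sum_congr rfl fun p _ => ?_
          rw [Finset.sum_mul, ← Finset.sum_neg_distrib]
          exact Finset.sum_congr rfl fun q _ => by ring
      _ = ∑ p, ∑ q, ∑ m,
            -((hi x m p * h x m l) * (h x s q * (starRingEnd ℂ) (θ x j p q))) := swap3 _
      _ = ∑ p, ∑ q,
            -((if p = l then (1:ℂ) else 0) * (h x s q * (starRingEnd ℂ) (θ x j p q))) := by
          refine Finset.sum_congr rfl fun p _ => Finset.sum_congr rfl fun q _ => ?_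
          rw [← hinv2 x hx p l, Finset.sum_mul, ← Finset.sum_neg_distrib]
      _ = -∑ p, ∑ q, (if p = l then (1:ℂ) else 0) * (h x s q * (starRingEnd ℂ) (θ x j p q)) := by
          rw [← Finset.sum_neg_distrib]
          exact Finset.sum_congr rfl fun p _ => Finset.sum_neg_distrib _
      _ = -∑ q, h x s q * (starRingEnd ℂ) (θ x j l q) := by rw [collapse2]
  have HC : ∑ m, (∑ s, Ath U h hi θ x i k s * Bth h hi θ x j s m) * h x m l
      = -(∑ q, wd U i (fun y => h y k q) x * (starRingEnd ℂ) (θ x j l q))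
        - ∑ p, ∑ q, θ x i k p * (starRingEnd ℂ) (θ x j l q) * h x p q := by
    calc ∑ m, (∑ s, Ath U h hi θ x i k s * Bth h hi θ x j s m) * h x m l
        = ∑ m, ∑ s, Ath U h hi θ x i k s * Bth h hi θ x j s m * h x m l :=
          Finset.sum_congr rfl fun m _ => Finset.sum_mul _ _ _
      _ = ∑ s, ∑ m, Ath U h hi θ x i k s * Bth h hi θ x j s m * h x m l := Finset.sum_comm
      _ = ∑ s, Ath U h hi θ x i k s * ∑ m, Bth h hi θ x j s m * h x m l := by
          refine Finset.sum_congr rfl fun s _ => ?_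
          rw [Finset.mul_sum]
          exact Finset.sum_congr rfl fun m _ => by ring
      _ = ∑ s, (Gam U h hi x i k s * (-∑ q, h x s q * (starRingEnd ℂ) (θ x j l q))
            + θ x i k s * (-∑ q, h x s q * (starRingEnd ℂ) (θ x j l q))) := by
          refine Finset.sum_congr rfl fun s _ => ?_
          rw [hBcontr s]
          have he : Ath U h hi θ x i k s = Gam U h hi x i k s + θ x i k s := rfl
          rw [he]; ring
      _ = (∑ s, ∑ q, -(Gam U h hi x i k s * h x s q * (starRingEnd ℂ) (θ x j l q)))
            + ∑ s, ∑ q, -(θ x i k s * (starRingEnd ℂ) (θ x j l q) * h x s q) := by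
          rw [← Finset.sum_add_distrib]
          refine Finset.sum_congr rfl fun s _ => ?_
          rw [mul_neg, mul_neg, Finset.mul_sum, Finset.mul_sum,
            ← Finset.sum_neg_distrib, ← Finset.sum_neg_distrib]
          congr 1
          · exact Finset.sum_congr rfl fun q _ => by ring
          · exact Finset.sum_congr rfl fun q _ => by ring
      _ = (-∑ q, ∑ s, Gam U h hi x i k s * h x s q * (starRingEnd ℂ) (θ x j l q))
            + -(∑ p, ∑ q, θ x i k p * (starRingEnd ℂ) (θ x j l q) * h x p q) := by
          congr 1
          · calc ∑ s, ∑ q, -(Gam U h hi x i k s * h x s q * (starRingEnd ℂ) (θ x j l q))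
                = ∑ s, -(∑ q, Gam U h hi x i k s * h x s q * (starRingEnd ℂ) (θ x j l q)) :=
                  Finset.sum_congr rfl fun s _ => Finset.sum_neg_distrib _
              _ = -∑ s, ∑ q, Gam U h hi x i k s * h x s q * (starRingEnd ℂ) (θ x j l q) :=
                  Finset.sum_neg_distrib _
              _ = -∑ q, ∑ s, Gam U h hi x i k s * h x s q * (starRingEnd ℂ) (θ x j l q) := by
                  rw [Finset.sum_comm]
          · calc ∑ s, ∑ q, -(θ x i k s * (starRingEnd ℂ) (θ x j l q) * h x s q)
                = ∑ s, -(∑ q, θ x i k s * (starRingEnd ℂ) (θ x j l q) * h x s q) :=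
                  Finset.sum_congr rfl fun s _ => Finset.sum_neg_distrib _
              _ = -(∑ p, ∑ q, θ x i k p * (starRingEnd ℂ) (θ x j l q) * h x p q) :=
                  Finset.sum_neg_distrib _
      _ = -(∑ q, wd U i (fun y => h y k q) x * (starRingEnd ℂ) (θ x j l q))
            - ∑ p, ∑ q, θ x i k p * (starRingEnd ℂ) (θ x j l q) * h x p q := by
          have hq : ∀ q : Fin n, ∑ s, Gam U h hi x i k s * h x s q * (starRingEnd ℂ) (θ x j l q)
              = wd U i (fun y => h y k q) x * (starRingEnd ℂ) (θ x j l q) := by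
            intro q
            rw [← hGamContr k q, Finset.sum_mul]
          simp only [hq]
          ring
  -- ==================== Have D ====================
  have hAcontr : ∀ s, ∑ m, Ath U h hi θ x i s m * h x m l
      = wd U i (fun y => h y s l) x + ∑ m, θ x i s m * h x m l := by
    intro s
    calc ∑ m, Ath U h hi θ x i s m * h x m l
        = ∑ m, (Gam U h hi x i s m * h x m l + θ x i s m * h x m l) := by
          refine Finset.sum_congr rfl fun m _ => ?_
          have he : Ath U h hi θ x i s m = Gam U h hi x i s m + θ x i s m := rfl
          rw [he, add_mul]
      _ = (∑ m, Gam U h hi x i s m * h x m l) + ∑ m, θ x i s m * h x m l :=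
          Finset.sum_add_distrib
      _ = _ := by rw [hGamContr s l]
  have HD : ∑ m, (∑ s, Bth h hi θ x j k s * Ath U h hi θ x i s m) * h x m l
      = -(∑ p, ∑ q, ∑ m, h x k q * hi x m p * wd U i (fun y => h y m l) x
            * (starRingEnd ℂ) (θ x j p q))
        - ∑ m, ∑ s, ∑ p, ∑ q, hi x m s * θ x i m p
            * (starRingEnd ℂ) (θ x j s q) * h x p l * h x k q := by
    have heB : ∀ s : Fin n, Bth h hi θ x j k s
        = -∑ p, ∑ q, h x k q * hi x s p * (starRingEnd ℂ) (θ x j p q) := fun s => rfl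
    calc ∑ m, (∑ s, Bth h hi θ x j k s * Ath U h hi θ x i s m) * h x m l
        = ∑ m, ∑ s, Bth h hi θ x j k s * Ath U h hi θ x i s m * h x m l :=
          Finset.sum_congr rfl fun m _ => Finset.sum_mul _ _ _
      _ = ∑ s, ∑ m, Bth h hi θ x j k s * Ath U h hi θ x i s m * h x m l := Finset.sum_comm
      _ = ∑ s, Bth h hi θ x j k s * ∑ m, Ath U h hi θ x i s m * h x m l := by
          refine Finset.sum_congr rfl fun s _ => ?_
          rw [Finset.mul_sum]
          exact Finset.sum_congr rfl fun m _ => by ring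
      _ = ∑ s, (Bth h hi θ x j k s * wd U i (fun y => h y s l) x
            + Bth h hi θ x j k s * ∑ m, θ x i s m * h x m l) := by
          refine Finset.sum_congr rfl fun s _ => ?_
          rw [hAcontr s, mul_add]
      _ = (∑ s, Bth h hi θ x j k s * wd U i (fun y => h y s l) x)
            + ∑ s, Bth h hi θ x j k s * ∑ m, θ x i s m * h x m l :=
          Finset.sum_add_distrib
      _ = -(∑ p, ∑ q, ∑ m, h x k q * hi x m p * wd U i (fun y => h y m l) x
              * (starRingEnd ℂ) (θ x j p q))
          + -(∑ m, ∑ s, ∑ p, ∑ q, hi x m s * θ x i m p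
              * (starRingEnd ℂ) (θ x j s q) * h x p l * h x k q) := by
          congr 1
          · calc ∑ s, Bth h hi θ x j k s * wd U i (fun y => h y s l) x
                = ∑ s, ∑ p, ∑ q, -(h x k q * hi x s p * (starRingEnd ℂ) (θ x j p q)
                    * wd U i (fun y => h y s l) x) := by
                  refine Finset.sum_congr rfl fun s _ => ?_
                  rw [heB s, neg_mul, Finset.sum_mul, ← Finset.sum_neg_distrib]
                  refine Finset.sum_congr rfl fun p _ => ?_
                  rw [Finset.sum_mul, ← Finset.sum_neg_distrib]
              _ = ∑ p, ∑ q, ∑ s, -(h x k q * hi x s p * (starRingEnd ℂ) (θ x j p q)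
                    * wd U i (fun y => h y s l) x) := swap3 _
              _ = ∑ p, ∑ q, ∑ s, -(h x k q * hi x s p * wd U i (fun y => h y s l) x
                    * (starRingEnd ℂ) (θ x j p q)) :=
                  Finset.sum_congr rfl fun p _ => Finset.sum_congr rfl fun q _ =>
                    Finset.sum_congr rfl fun s _ => by ring
              _ = -(∑ p, ∑ q, ∑ m, h x k q * hi x m p * wd U i (fun y => h y m l) x
                    * (starRingEnd ℂ) (θ x j p q)) := by
                  simp only [Finset.sum_neg_distrib]
          · calc ∑ s, Bth h hi θ x j k s * ∑ m, θ x i s m * h x m l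
                = ∑ s, ∑ p, ∑ q, ∑ m, -(hi x s p * θ x i s m
                    * (starRingEnd ℂ) (θ x j p q) * h x m l * h x k q) := by
                  refine Finset.sum_congr rfl fun s _ => ?_
                  rw [heB s, neg_mul, Finset.sum_mul, ← Finset.sum_neg_distrib]
                  refine Finset.sum_congr rfl fun p _ => ?_
                  rw [Finset.sum_mul, ← Finset.sum_neg_distrib]
                  refine Finset.sum_congr rfl fun q _ => ?_
                  rw [Finset.mul_sum, ← Finset.sum_neg_distrib]
                  exact Finset.sum_congr rfl fun m _ => by ring
              _ = ∑ s, ∑ p, ∑ m, ∑ q, -(hi x s p * θ x i s m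
                    * (starRingEnd ℂ) (θ x j p q) * h x m l * h x k q) := by
                  refine Finset.sum_congr rfl fun s _ =>
                    Finset.sum_congr rfl fun p _ => Finset.sum_comm
              _ = -(∑ m, ∑ s, ∑ p, ∑ q, hi x m s * θ x i m p
                    * (starRingEnd ℂ) (θ x j s q) * h x p l * h x k q) := by
                  simp only [Finset.sum_neg_distrib]
  -- ==================== assembly ====================
  have hsplit : (∑ m, Rth U h hi θ x i j k m * h x m l)
      = -(∑ m, wdb U j (fun y => Ath U h hi θ y i k m) x * h x m l)
        + (∑ m, wd U i (fun y => Bth h hi θ y j k m) x * h x m l)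
        - (∑ m, (∑ s, Ath U h hi θ x i k s * Bth h hi θ x j s m) * h x m l)
        + (∑ m, (∑ s, Bth h hi θ x j k s * Ath U h hi θ x i s m) * h x m l) := by
    have he : ∀ m : Fin n, Rth U h hi θ x i j k m * h x m l
        = -(wdb U j (fun y => Ath U h hi θ y i k m) x * h x m l)
          + wd U i (fun y => Bth h hi θ y j k m) x * h x m l
          - (∑ s, Ath U h hi θ x i k s * Bth h hi θ x j s m) * h x m l
          + (∑ s, Bth h hi θ x j k s * Ath U h hi θ x i s m) * h x m l := by
      intro m
      have h0 : Rth U h hi θ x i j k m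
          = -(wdb U j (fun y => Ath U h hi θ y i k m) x
            - wd U i (fun y => Bth h hi θ y j k m) x
            + (∑ s, Ath U h hi θ x i k s * Bth h hi θ x j s m)
            - ∑ s, Bth h hi θ x j k s * Ath U h hi θ x i s m) := rfl
      rw [h0]; ring
    rw [Finset.sum_congr rfl fun m _ => he m]
    simp only [Finset.sum_add_distrib, Finset.sum_sub_distrib, Finset.sum_neg_distrib]
  rw [hsplit, HA, HB, HC, HD]
  have hswap : wdb U j (fun y => wd U i (fun w => h w k l) y) x
      = wd U i (fun y => wdb U j (fun w => h w k l) y) x :=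
    (TC.wd_wdb_comm hU hx (hsm' k l)).symm
  rw [hswap]
  rw [show Th U h hi x i j k l
      = -(wd U i (fun y => wdb U j (fun w => h w k l) y) x)
        + ∑ p, ∑ q, hi x p q * wdb U j (fun y => h y p l) x
            * wd U i (fun y => h y k q) x from rfl]
  ring
end
end

section
/- Let θ_{ij}^k = t η_i δ_j^k with η = η_i dz^i a smooth (1,0)-form on an open set of C^n and t ∈ R. Then the first Ricci curvature of the associated connection satisfies Ric^{(1)}(θ) = Θ^{(1)} - n t √-1 (∂conj(η) - ∂̄η); in particular, if dη = 0 then R^θ_{i\bar{j}k\bar{ℓ}} = Θ_{i\bar{j}k\bar{ℓ}} for all t. -/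
noncomputable section

open Complex

namespace EtaAux

variable {n : ℕ} {U : Set (Fin n → ℂ)} {x : Fin n → ℂ}

/-- directional derivative within U -/
def dd (U : Set (Fin n → ℂ)) (v : Fin n → ℂ) (f : (Fin n → ℂ) → ℂ) (x : Fin n → ℂ) : ℂ :=
  fderivWithin ℝ f U x v

theorem wd_eq (i : Fin n) (f : (Fin n → ℂ) → ℂ) :
    wd U i f x = (1/2) * (dd U (Pi.single i 1) f x - Complex.I * dd U (Pi.single i Complex.I) f x) := rfl

theorem wdb_eq (i : Fin n) (f : (Fin n → ℂ) → ℂ) :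
    wdb U i f x = (1/2) * (dd U (Pi.single i 1) f x + Complex.I * dd U (Pi.single i Complex.I) f x) := rfl

theorem dd_congr (hx : x ∈ U) {f g : (Fin n → ℂ) → ℂ} (hfg : Set.EqOn f g U) (v : Fin n → ℂ) :
    dd U v f x = dd U v g x := by
  unfold dd; rw [fderivWithin_congr hfg (hfg hx)]

theorem dd_const (hU : IsOpen U) (hx : x ∈ U) (v : Fin n → ℂ) (c : ℂ) :
    dd U v (fun _ => c) x = 0 := by
  simp [dd, fderivWithin_const_apply c]

theorem dd_add (hU : IsOpen U) (hx : x ∈ U) {f g : (Fin n → ℂ) → ℂ}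
    (hf : DifferentiableWithinAt ℝ f U x) (hg : DifferentiableWithinAt ℝ g U x) (v : Fin n → ℂ) :
    dd U v (fun y => f y + g y) x = dd U v f x + dd U v g x := by
  unfold dd; rw [fderivWithin_fun_add (hU.uniqueDiffWithinAt hx) hf hg]; simp

theorem dd_sub (hU : IsOpen U) (hx : x ∈ U) {f g : (Fin n → ℂ) → ℂ}
    (hf : DifferentiableWithinAt ℝ f U x) (hg : DifferentiableWithinAt ℝ g U x) (v : Fin n → ℂ) :
    dd U v (fun y => f y - g y) x = dd U v f x - dd U v g x := by
  unfold dd; rw [fderivWithin_fun_sub (hU.uniqueDiffWithinAt hx) hf hg]; simp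

theorem dd_sum (hU : IsOpen U) (hx : x ∈ U) {ι : Type*} (s : Finset ι)
    {f : ι → (Fin n → ℂ) → ℂ} (hf : ∀ a ∈ s, DifferentiableWithinAt ℝ (f a) U x) (v : Fin n → ℂ) :
    dd U v (fun y => ∑ a ∈ s, f a y) x = ∑ a ∈ s, dd U v (f a) x := by
  unfold dd; rw [fderivWithin_fun_sum (hU.uniqueDiffWithinAt hx) hf]; simp

theorem dd_mul (hU : IsOpen U) (hx : x ∈ U) {f g : (Fin n → ℂ) → ℂ}
    (hf : DifferentiableWithinAt ℝ f U x) (hg : DifferentiableWithinAt ℝ g U x) (v : Fin n → ℂ) :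
    dd U v (fun y => f y * g y) x = f x * dd U v g x + g x * dd U v f x := by
  unfold dd; rw [fderivWithin_fun_mul (hU.uniqueDiffWithinAt hx) hf hg]; simp [smul_eq_mul]

theorem dd_const_mul (hU : IsOpen U) (hx : x ∈ U) {f : (Fin n → ℂ) → ℂ}
    (hf : DifferentiableWithinAt ℝ f U x) (c : ℂ) (v : Fin n → ℂ) :
    dd U v (fun y => c * f y) x = c * dd U v f x := by
  unfold dd; rw [fderivWithin_const_mul (hU.uniqueDiffWithinAt hx) hf]; simp [smul_eq_mul]

theorem dd_conj (hU : IsOpen U) (hx : x ∈ U) {f : (Fin n → ℂ) → ℂ} (v : Fin n → ℂ) :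
    dd U v (fun y => (starRingEnd ℂ) (f y)) x = (starRingEnd ℂ) (dd U v f x) := by
  unfold dd
  have h1 : (fun y => (starRingEnd ℂ) (f y)) = (Complex.conjCLE ∘ f) := rfl
  rw [h1, Complex.conjCLE.comp_fderivWithin (hU.uniqueDiffWithinAt hx)]
  simp


theorem wd_congr (hx : x ∈ U) {f g : (Fin n → ℂ) → ℂ} (hfg : Set.EqOn f g U) (i : Fin n) :
    wd U i f x = wd U i g x := by
  rw [wd_eq, wd_eq, dd_congr hx hfg, dd_congr hx hfg]

theorem wdb_congr (hx : x ∈ U) {f g : (Fin n → ℂ) → ℂ} (hfg : Set.EqOn f g U) (i : Fin n) :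
    wdb U i f x = wdb U i g x := by
  rw [wdb_eq, wdb_eq, dd_congr hx hfg, dd_congr hx hfg]

theorem wdb_const (hU : IsOpen U) (hx : x ∈ U) (i : Fin n) (c : ℂ) :
    wdb U i (fun _ => c) x = 0 := by
  rw [wdb_eq, dd_const hU hx, dd_const hU hx]; ring

theorem wdb_add (hU : IsOpen U) (hx : x ∈ U) {f g : (Fin n → ℂ) → ℂ}
    (hf : DifferentiableWithinAt ℝ f U x) (hg : DifferentiableWithinAt ℝ g U x) (i : Fin n) :
    wdb U i (fun y => f y + g y) x = wdb U i f x + wdb U i g x := by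
  rw [wdb_eq, wdb_eq, wdb_eq, dd_add hU hx hf hg, dd_add hU hx hf hg]; ring

theorem wdb_sum (hU : IsOpen U) (hx : x ∈ U) {ι : Type*} {s : Finset ι}
    {f : ι → (Fin n → ℂ) → ℂ} (hf : ∀ a ∈ s, DifferentiableWithinAt ℝ (f a) U x) (i : Fin n) :
    wdb U i (fun y => ∑ a ∈ s, f a y) x = ∑ a ∈ s, wdb U i (f a) x := by
  simp only [wdb_eq, dd_sum hU hx s hf]
  rw [Finset.mul_sum, ← Finset.sum_add_distrib, Finset.mul_sum]

theorem wdb_mul (hU : IsOpen U) (hx : x ∈ U) {f g : (Fin n → ℂ) → ℂ}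
    (hf : DifferentiableWithinAt ℝ f U x) (hg : DifferentiableWithinAt ℝ g U x) (i : Fin n) :
    wdb U i (fun y => f y * g y) x = f x * wdb U i g x + g x * wdb U i f x := by
  rw [wdb_eq, wdb_eq, wdb_eq, dd_mul hU hx hf hg, dd_mul hU hx hf hg]; ring

theorem wd_const_mul (hU : IsOpen U) (hx : x ∈ U) {f : (Fin n → ℂ) → ℂ}
    (hf : DifferentiableWithinAt ℝ f U x) (c : ℂ) (i : Fin n) :
    wd U i (fun y => c * f y) x = c * wd U i f x := by
  rw [wd_eq, wd_eq, dd_const_mul hU hx hf, dd_const_mul hU hx hf]; ring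

theorem wdb_const_mul (hU : IsOpen U) (hx : x ∈ U) {f : (Fin n → ℂ) → ℂ}
    (hf : DifferentiableWithinAt ℝ f U x) (c : ℂ) (i : Fin n) :
    wdb U i (fun y => c * f y) x = c * wdb U i f x := by
  rw [wdb_eq, wdb_eq, dd_const_mul hU hx hf, dd_const_mul hU hx hf]; ring

theorem wd_conj (hU : IsOpen U) (hx : x ∈ U) {f : (Fin n → ℂ) → ℂ} (i : Fin n) :
    wd U i (fun y => (starRingEnd ℂ) (f y)) x = (starRingEnd ℂ) (wdb U i f x) := by
  rw [wd_eq, wdb_eq, dd_conj hU hx, dd_conj hU hx]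
  simp only [map_mul, map_add, map_sub, Complex.conj_I, map_div₀, map_one, map_ofNat]
  ring

/-- smoothness is preserved by directional derivative -/
theorem contDiffOn_dd (hU : IsOpen U) {f : (Fin n → ℂ) → ℂ}
    (hf : ContDiffOn ℝ 2 f U) (v : Fin n → ℂ) :
    ContDiffOn ℝ 1 (fun y => dd U v f y) U :=
  (hf.fderivWithin hU.uniqueDiffOn (by norm_num)).clm_apply contDiffOn_const

theorem contDiffOn_wd (hU : IsOpen U) {f : (Fin n → ℂ) → ℂ}
    (hf : ContDiffOn ℝ 2 f U) (i : Fin n) :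
    ContDiffOn ℝ 1 (fun y => wd U i f y) U := by
  have : (fun y => wd U i f y)
      = fun y => (1/2 : ℂ) * (dd U (Pi.single i 1) f y - Complex.I * dd U (Pi.single i Complex.I) f y) := rfl
  rw [this]
  exact contDiffOn_const.mul ((contDiffOn_dd hU hf _).sub (contDiffOn_const.mul (contDiffOn_dd hU hf _)))

/-- Schwarz symmetry for second derivatives on an open set -/
theorem dd_dd_comm (hU : IsOpen U) (hx : x ∈ U) {f : (Fin n → ℂ) → ℂ}
    (hf : ContDiffOn ℝ 2 f U) (v w : Fin n → ℂ) :
    dd U w (fun y => dd U v f y) x = dd U v (fun y => dd U w f y) x := by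
  have hxU : U ∈ nhds x := hU.mem_nhds hx
  have hfx : ContDiffAt ℝ 2 f x := hf.contDiffAt hxU
  have hdiff : ∀ y ∈ U, DifferentiableAt ℝ f y := fun y hy =>
    (hf.contDiffAt (hU.mem_nhds hy)).differentiableAt two_ne_zero
  have hev : ∀ᶠ y in nhds x, HasFDerivAt f (fderiv ℝ f y) y :=
    Filter.eventually_of_mem hxU (fun y hy => (hdiff y hy).hasFDerivAt)
  have hf' : DifferentiableAt ℝ (fderiv ℝ f) x :=
    (hfx.fderiv_right (m := 1) (by norm_num)).differentiableAt one_ne_zero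
  have hsymm := second_derivative_symmetric_of_eventually hev hf'.hasFDerivAt
  have key : ∀ u v' : Fin n → ℂ,
      dd U u (fun y => dd U v' f y) x = fderiv ℝ (fderiv ℝ f) x u v' := by
    intro u v'
    unfold dd
    rw [fderivWithin_of_isOpen hU hx]
    have he : (fun y => fderivWithin ℝ f U y v') =ᶠ[nhds x] (fun y => fderiv ℝ f y v') :=
      Filter.eventually_of_mem hxU (fun y hy => by
        show fderivWithin ℝ f U y v' = fderiv ℝ f y v'
        rw [fderivWithin_of_isOpen hU hy])
    rw [he.fderiv_eq, fderiv_clm_apply hf' (differentiableAt_const v')]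
    simp
  rw [key, key]
  exact hsymm w v


theorem wd_wdb_comm (hU : IsOpen U) (hx : x ∈ U) {f : (Fin n → ℂ) → ℂ}
    (hf : ContDiffOn ℝ 2 f U) (i j : Fin n) :
    wd U i (fun y => wdb U j f y) x = wdb U j (fun y => wd U i f y) x := by
  have hd : ∀ v y, y ∈ U → DifferentiableWithinAt ℝ (fun y => dd U v f y) U y :=
    fun v y hy => (contDiffOn_dd hU hf v).differentiableOn one_ne_zero y hy
  have hdd_wdb : ∀ u : Fin n → ℂ,
      dd U u (fun y => wdb U j f y) x
        = (1/2 : ℂ) * (dd U u (fun y => dd U (Pi.single j 1) f y) x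
            + Complex.I * dd U u (fun y => dd U (Pi.single j Complex.I) f y) x) := by
    intro u
    have h1 : (fun y => wdb U j f y)
        = fun y => (1/2 : ℂ) * (dd U (Pi.single j 1) f y + Complex.I * dd U (Pi.single j Complex.I) f y) := rfl
    rw [h1, dd_const_mul hU hx (((hd _ x hx).fun_add ((differentiableWithinAt_const _).fun_mul (hd _ x hx)))) _ u,
      dd_add hU hx (hd _ x hx) ((differentiableWithinAt_const _).fun_mul (hd _ x hx)) u,
      dd_const_mul hU hx (hd _ x hx) _ u]
  have hdd_wd : ∀ u : Fin n → ℂ,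
      dd U u (fun y => wd U i f y) x
        = (1/2 : ℂ) * (dd U u (fun y => dd U (Pi.single i 1) f y) x
            - Complex.I * dd U u (fun y => dd U (Pi.single i Complex.I) f y) x) := by
    intro u
    have h1 : (fun y => wd U i f y)
        = fun y => (1/2 : ℂ) * (dd U (Pi.single i 1) f y - Complex.I * dd U (Pi.single i Complex.I) f y) := rfl
    rw [h1, dd_const_mul hU hx (((hd _ x hx).fun_sub ((differentiableWithinAt_const _).fun_mul (hd _ x hx)))) _ u,
      dd_sub hU hx (hd _ x hx) ((differentiableWithinAt_const _).fun_mul (hd _ x hx)) u,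
      dd_const_mul hU hx (hd _ x hx) _ u]
  rw [wd_eq, wdb_eq, hdd_wdb, hdd_wdb, hdd_wd, hdd_wd,
    dd_dd_comm hU hx hf (Pi.single j 1) (Pi.single i 1),
    dd_dd_comm hU hx hf (Pi.single j Complex.I) (Pi.single i 1),
    dd_dd_comm hU hx hf (Pi.single j 1) (Pi.single i Complex.I),
    dd_dd_comm hU hx hf (Pi.single j Complex.I) (Pi.single i Complex.I)]
  ring

theorem contDiffOn_finprod {m : WithTop ℕ∞} {ι : Type*} (s : Finset ι)
    (f : ι → (Fin n → ℂ) → ℂ) (hf : ∀ a ∈ s, ContDiffOn ℝ m (f a) U) :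
    ContDiffOn ℝ m (fun y => ∏ a ∈ s, f a y) U := by
  classical
  revert hf
  refine Finset.cons_induction_on s ?_ ?_
  · intro _; simpa using contDiffOn_const
  · intro a s ha ih hf
    simp only [Finset.prod_cons]
    exact (hf a (Finset.mem_cons_self a s)).mul (ih fun b hb => hf b (Finset.mem_cons_of_mem hb))

theorem contDiffOn_det {m : WithTop ℕ∞} (A : (Fin n → ℂ) → Matrix (Fin n) (Fin n) ℂ)
    (hA : ∀ i j, ContDiffOn ℝ m (fun y => A y i j) U) :
    ContDiffOn ℝ m (fun y => (A y).det) U := by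
  have h1 : (fun y => (A y).det)
      = fun y => ∑ σ : Equiv.Perm (Fin n), ((Equiv.Perm.sign σ : ℤ) : ℂ) * ∏ i, A y (σ i) i := by
    funext y; rw [Matrix.det_apply']
  rw [h1]
  exact ContDiffOn.sum fun σ _ =>
    contDiffOn_const.mul (contDiffOn_finprod Finset.univ _ fun i _ => hA (σ i) i)

end EtaAux

open EtaAux in
/-- for `θ_{ij}^k = t η_i δ_j^k`, the first Ricci curvature of the
associated connection satisfies
`Ric^{(1)}(θ) = Θ^{(1)} - n t √-1 (∂ conj(η) - ∂̄ η)`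
(at the level of coefficients of `dz^i ∧ dz̄^j`), and if `dη = 0` then
`R^θ_{i\bar j k\bar ℓ} = Θ_{i\bar j k\bar ℓ}` for all `t`. -/
theorem eta_theta_ricci_formula
    {n : ℕ} (U : Set (Fin n → ℂ)) (hU : IsOpen U)
    (h hi : (Fin n → ℂ) → Fin n → Fin n → ℂ)
    (hsm : ∀ i j, ContDiffOn ℝ (⊤ : ℕ∞) (fun y => h y i j) U)
    (hherm : ∀ x ∈ U, ∀ i j, h x i j = (starRingEnd ℂ) (h x j i))
    (hpos : ∀ x ∈ U, ∀ v : Fin n → ℂ, v ≠ 0 →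
      0 < (∑ i, ∑ j, h x i j * v i * (starRingEnd ℂ) (v j)).re)
    (hinv1 : ∀ x ∈ U, ∀ j k, ∑ l, h x j l * hi x k l = if j = k then 1 else 0)
    (hinv2 : ∀ x ∈ U, ∀ l m, ∑ k, hi x k l * h x k m = if l = m then 1 else 0)
    (η : (Fin n → ℂ) → Fin n → ℂ)
    (hηsm : ∀ i, ContDiffOn ℝ (⊤ : ℕ∞) (fun y => η y i) U)
    (t : ℝ)
    (θ : (Fin n → ℂ) → Fin n → Fin n → Fin n → ℂ)
    (hθ : ∀ x i j k, θ x i j k = (t : ℂ) * η x i * (if j = k then 1 else 0)) :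
    (∀ x ∈ U, ∀ i j,
      (∑ k, ∑ l, hi x k l * (∑ m, Rth U h hi θ x i j k m * h x m l))
        = (∑ k, ∑ l, hi x k l * Th U h hi x i j k l)
          - (n : ℂ) * (t : ℂ) *
            (wd U i (fun y => (starRingEnd ℂ) (η y j)) x
              + wdb U j (fun y => η y i) x)) ∧
    (((∀ x ∈ U, ∀ i j, wd U i (fun y => η y j) x = wd U j (fun y => η y i) x) ∧
      (∀ x ∈ U, ∀ i j, wdb U j (fun y => η y i) x = 0)) →
      ∀ x ∈ U, ∀ i j k l,
        (∑ m, Rth U h hi θ x i j k m * h x m l) = Th U h hi x i j k l) := by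
  classical
  have hsm2 : ∀ a b, ContDiffOn ℝ 2 (fun y => h y a b) U := fun a b => (hsm a b).of_le (WithTop.coe_le_coe.mpr le_top)
  have hη2 : ∀ a, ContDiffOn ℝ 2 (fun y => η y a) U := fun a => (hηsm a).of_le (WithTop.coe_le_coe.mpr le_top)
  -- inverse metric is smooth
  have hMright : ∀ y ∈ U, (Matrix.of fun a b => h y a b) * (Matrix.of fun a b => hi y b a) = 1 := by
    intro y hy
    ext a b
    simp only [Matrix.mul_apply, Matrix.of_apply, Matrix.one_apply]
    exact hinv1 y hy a b
  have hi_eq : ∀ y ∈ U, ∀ k l, hi y k l = (Matrix.of fun a b => h y a b)⁻¹ l k := by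
    intro y hy k l
    rw [Matrix.inv_eq_right_inv (hMright y hy)]
    rfl
  have hdetne : ∀ y ∈ U, (Matrix.of fun a b => h y a b).det ≠ 0 := fun y hy =>
    (Matrix.isUnit_det_of_right_inverse (hMright y hy)).ne_zero
  have hi2 : ∀ k l, ContDiffOn ℝ 2 (fun y => hi y k l) U := by
    intro k l
    have hdetS : ContDiffOn ℝ 2 (fun y => (Matrix.of fun a b => h y a b).det) U :=
      contDiffOn_det _ (fun a b => hsm2 a b)
    have hadjS : ContDiffOn ℝ 2 (fun y => (Matrix.of fun a b => h y a b).adjugate l k) U := by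
      have h1 : (fun y => (Matrix.of fun a b => h y a b).adjugate l k)
          = fun y => ((Matrix.of fun a b => h y a b).updateRow k (Pi.single l 1)).det := by
        funext y; rw [Matrix.adjugate_apply]
      rw [h1]
      refine contDiffOn_det _ (fun a b => ?_)
      by_cases hak : a = k
      · subst hak
        simp only [Matrix.updateRow_apply, if_pos rfl]
        exact contDiffOn_const
      · simp only [Matrix.updateRow_apply, if_neg hak, Matrix.of_apply]
        exact hsm2 a b
    refine (ContDiffOn.mul (hdetS.inv hdetne) hadjS).congr (fun y hy => ?_)
    rw [hi_eq y hy k l, Matrix.inv_def]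
    simp [Ring.inverse_eq_inv', smul_eq_mul]
  -- pointwise differentiability facts
  have hdh : ∀ x ∈ U, ∀ a b, DifferentiableWithinAt ℝ (fun y => h y a b) U x :=
    fun x hx a b => (hsm2 a b).differentiableOn two_ne_zero x hx
  have hdhi : ∀ x ∈ U, ∀ a b, DifferentiableWithinAt ℝ (fun y => hi y a b) U x :=
    fun x hx a b => (hi2 a b).differentiableOn two_ne_zero x hx
  have hdη : ∀ x ∈ U, ∀ a, DifferentiableWithinAt ℝ (fun y => η y a) U x :=
    fun x hx a => (hη2 a).differentiableOn two_ne_zero x hx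
  have hdηc : ∀ x ∈ U, ∀ a, DifferentiableWithinAt ℝ (fun y => (starRingEnd ℂ) (η y a)) U x :=
    fun x hx a =>
      Complex.conjCLE.differentiable.differentiableAt.comp_differentiableWithinAt x (hdη x hx a)
  have hdwd : ∀ x ∈ U, ∀ (i a b : Fin n),
      DifferentiableWithinAt ℝ (fun y => wd U i (fun w => h w a b) y) U x :=
    fun x hx i a b => (contDiffOn_wd hU (hsm2 a b) i).differentiableOn one_ne_zero x hx
  have hdGam : ∀ x ∈ U, ∀ (i k m : Fin n),
      DifferentiableWithinAt ℝ (fun y => Gam U h hi y i k m) U x := by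
    intro x hx i k m
    have h1 : (fun y => Gam U h hi y i k m)
        = fun y => ∑ p, hi y m p * wd U i (fun w => h w k p) y := rfl
    rw [h1]
    exact DifferentiableWithinAt.fun_sum fun p _ => (hdhi x hx m p).fun_mul (hdwd x hx i k p)
  -- the B coefficient collapses
  have hBth : ∀ y ∈ U, ∀ (j k l : Fin n),
      Bth h hi θ y j k l
        = -((t:ℂ) * (starRingEnd ℂ) (η y j)) * (if k = l then (1:ℂ) else 0) := by
    intro y hy j k l
    have h1 : ∀ p q : Fin n, h y k q * hi y l p * (starRingEnd ℂ) (θ y j p q)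
        = (if p = q then ((t:ℂ) * (starRingEnd ℂ) (η y j)) * (h y k q * hi y l p) else 0) := by
      intro p q
      rw [hθ]
      by_cases hpq : p = q
      · subst hpq
        rw [if_pos rfl, if_pos rfl, mul_one, map_mul, Complex.conj_ofReal]
        ring
      · simp [hpq]
    simp only [Bth, h1]
    rw [Finset.sum_congr rfl fun p (_ : p ∈ Finset.univ) =>
      Finset.sum_ite_eq Finset.univ p
        (fun q => ((t:ℂ) * (starRingEnd ℂ) (η y j)) * (h y k q * hi y l p))]
    simp only [Finset.mem_univ, if_true]
    rw [← Finset.mul_sum,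
      show (∑ p, h y k p * hi y l p) = if k = l then (1:ℂ) else 0 from hinv1 y hy k l]
    ring
  -- differentiated inverse identity
  have hinvdiff : ∀ x ∈ U, ∀ (j p l : Fin n),
      ∑ m, wdb U j (fun y => hi y m p) x * h x m l
        = -∑ m, hi x m p * wdb U j (fun y => h y m l) x := by
    intro x hx j p l
    have h0 : wdb U j (fun y => ∑ m, hi y m p * h y m l) x = 0 := by
      rw [wdb_congr hx (g := fun _ => if p = l then (1:ℂ) else 0)
        (fun y hy => hinv2 y hy p l) j]
      exact wdb_const hU hx j _
    rw [wdb_sum hU hx (fun m _ => (hdhi x hx m p).fun_mul (hdh x hx m l)) j,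
      Finset.sum_congr rfl (fun m _ => wdb_mul hU hx (hdhi x hx m p) (hdh x hx m l) j),
      Finset.sum_add_distrib] at h0
    rw [Finset.sum_congr rfl (fun m (_ : m ∈ Finset.univ) =>
      mul_comm (wdb U j (fun y => hi y m p) x) (h x m l))]
    linear_combination h0
  -- the key curvature identity : ∑_m ∂̄Γ h = -Θ
  have hGamKey : ∀ x ∈ U, ∀ i j k l,
      ∑ m, wdb U j (fun y => Gam U h hi y i k m) x * h x m l = -Th U h hi x i j k l := by
    intro x hx i j k l
    have hexp : ∀ m, wdb U j (fun y => Gam U h hi y i k m) x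
        = ∑ p, (hi x m p * wdb U j (fun y => wd U i (fun w => h w k p) y) x
            + wd U i (fun w => h w k p) x * wdb U j (fun y => hi y m p) x) := by
      intro m
      have h1 : (fun y => Gam U h hi y i k m)
          = fun y => ∑ p, hi y m p * wd U i (fun w => h w k p) y := rfl
      rw [h1, wdb_sum hU hx (fun p _ => (hdhi x hx m p).fun_mul (hdwd x hx i k p)) j]
      exact Finset.sum_congr rfl fun p _ => wdb_mul hU hx (hdhi x hx m p) (hdwd x hx i k p) j
    calc ∑ m, wdb U j (fun y => Gam U h hi y i k m) x * h x m l
        = ∑ m, ∑ p, ((hi x m p * h x m l) * wdb U j (fun y => wd U i (fun w => h w k p) y) x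
            + (wdb U j (fun y => hi y m p) x * h x m l) * wd U i (fun w => h w k p) x) := by
          refine Finset.sum_congr rfl fun m _ => ?_
          rw [hexp m, Finset.sum_mul]
          exact Finset.sum_congr rfl fun p _ => by ring
      _ = ∑ p, ∑ m, ((hi x m p * h x m l) * wdb U j (fun y => wd U i (fun w => h w k p) y) x
            + (wdb U j (fun y => hi y m p) x * h x m l) * wd U i (fun w => h w k p) x) :=
          Finset.sum_comm
      _ = ∑ p, ((∑ m, hi x m p * h x m l) * wdb U j (fun y => wd U i (fun w => h w k p) y) x
            + (∑ m, wdb U j (fun y => hi y m p) x * h x m l) * wd U i (fun w => h w k p) x) := by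
          refine Finset.sum_congr rfl fun p _ => ?_
          rw [Finset.sum_add_distrib, ← Finset.sum_mul, ← Finset.sum_mul]
      _ = ∑ p, ((if p = l then (1:ℂ) else 0) * wdb U j (fun y => wd U i (fun w => h w k p) y) x
            + (-∑ m, hi x m p * wdb U j (fun y => h y m l) x) * wd U i (fun w => h w k p) x) := by
          refine Finset.sum_congr rfl fun p _ => ?_
          rw [hinv2 x hx p l, hinvdiff x hx j p l]
      _ = wdb U j (fun y => wd U i (fun w => h w k l) y) x
          + -∑ p, (∑ m, hi x m p * wdb U j (fun y => h y m l) x)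
              * wd U i (fun w => h w k p) x := by
          rw [Finset.sum_add_distrib]
          congr 1
          · simp
          · simp [neg_mul]
      _ = -Th U h hi x i j k l := by
          rw [← wd_wdb_comm hU hx (hsm2 k l) i j]
          simp only [Th, neg_add, neg_neg]
          congr 2
          calc ∑ p, (∑ m, hi x m p * wdb U j (fun y => h y m l) x)
                * wd U i (fun w => h w k p) x
              = ∑ p, ∑ m, hi x m p * wdb U j (fun y => h y m l) x
                  * wd U i (fun w => h w k p) x := by
                refine Finset.sum_congr rfl fun p _ => ?_
                rw [Finset.sum_mul]
            _ = ∑ m, ∑ p, hi x m p * wdb U j (fun y => h y m l) x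
                  * wd U i (fun w => h w k p) x := Finset.sum_comm
  -- curvature of the modified connection
  have hRth : ∀ x ∈ U, ∀ i j k m,
      Rth U h hi θ x i j k m
        = -(wdb U j (fun y => Gam U h hi y i k m) x)
          - (t:ℂ) * (if k = m then (1:ℂ) else 0) *
            (wd U i (fun y => (starRingEnd ℂ) (η y j)) x + wdb U j (fun y => η y i) x) := by
    intro x hx i j k m
    have hA : wdb U j (fun y => Ath U h hi θ y i k m) x
        = wdb U j (fun y => Gam U h hi y i k m) x
          + ((t:ℂ) * (if k = m then (1:ℂ) else 0)) * wdb U j (fun y => η y i) x := by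
      have h1 : (fun y => Ath U h hi θ y i k m)
          = fun y => Gam U h hi y i k m + ((t:ℂ) * (if k = m then (1:ℂ) else 0)) * η y i := by
        funext y; simp only [Ath, hθ]; ring
      rw [h1, wdb_add hU hx (hdGam x hx i k m)
        ((differentiableWithinAt_const _).fun_mul (hdη x hx i)) j,
        wdb_const_mul hU hx (hdη x hx i) _ j]
    have hB : wd U i (fun y => Bth h hi θ y j k m) x
        = -((t:ℂ) * (if k = m then (1:ℂ) else 0)) * wd U i (fun y => (starRingEnd ℂ) (η y j)) x := by
      have h1 : Set.EqOn (fun y => Bth h hi θ y j k m)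
          (fun y => (-((t:ℂ) * (if k = m then (1:ℂ) else 0))) * (starRingEnd ℂ) (η y j)) U := by
        intro y hy
        simp only
        rw [hBth y hy j k m]
        ring
      rw [wd_congr hx h1 i, wd_const_mul hU hx (hdηc x hx j) _ i]
    have hS1 : (∑ s, Ath U h hi θ x i k s * Bth h hi θ x j s m)
        = -((t:ℂ) * (starRingEnd ℂ) (η x j)) * Ath U h hi θ x i k m := by
      have h1 : ∀ s : Fin n, Ath U h hi θ x i k s * Bth h hi θ x j s m
          = (if s = m then -((t:ℂ) * (starRingEnd ℂ) (η x j)) * Ath U h hi θ x i k s else 0) := by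
        intro s
        rw [hBth x hx j s m]
        by_cases hsm' : s = m
        · subst hsm'; rw [if_pos rfl, if_pos rfl, mul_one]; ring
        · rw [if_neg hsm', if_neg hsm', mul_zero]; ring
      simp only [h1]
      rw [Finset.sum_ite_eq' Finset.univ m
        (fun s => -((t:ℂ) * (starRingEnd ℂ) (η x j)) * Ath U h hi θ x i k s)]
      simp
    have hS2 : (∑ s, Bth h hi θ x j k s * Ath U h hi θ x i s m)
        = -((t:ℂ) * (starRingEnd ℂ) (η x j)) * Ath U h hi θ x i k m := by
      have h1 : ∀ s : Fin n, Bth h hi θ x j k s * Ath U h hi θ x i s m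
          = (if k = s then -((t:ℂ) * (starRingEnd ℂ) (η x j)) * Ath U h hi θ x i s m else 0) := by
        intro s
        rw [hBth x hx j k s]
        by_cases hks : k = s
        · subst hks; rw [if_pos rfl, if_pos rfl, mul_one]
        · rw [if_neg hks, if_neg hks]; ring
      simp only [h1]
      rw [Finset.sum_ite_eq Finset.univ k
        (fun s => -((t:ℂ) * (starRingEnd ℂ) (η x j)) * Ath U h hi θ x i s m)]
      simp
    simp only [Rth]
    rw [hA, hB, hS1, hS2]
    ring
  -- summed curvature formula
  have hRhsum : ∀ x ∈ U, ∀ i j k l,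
      ∑ m, Rth U h hi θ x i j k m * h x m l
        = Th U h hi x i j k l
          - (t:ℂ) * (wd U i (fun y => (starRingEnd ℂ) (η y j)) x
              + wdb U j (fun y => η y i) x) * h x k l := by
    intro x hx i j k l
    have h1 : ∀ m : Fin n, Rth U h hi θ x i j k m * h x m l
        = -(wdb U j (fun y => Gam U h hi y i k m) x * h x m l)
          + (if k = m then
              -((t:ℂ) * (wd U i (fun y => (starRingEnd ℂ) (η y j)) x
                + wdb U j (fun y => η y i) x) * h x m l) else 0) := by
      intro m
      rw [hRth x hx i j k m]
      by_cases hkm : k = m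
      · subst hkm; rw [if_pos rfl, if_pos rfl]; ring
      · rw [if_neg hkm, if_neg hkm]; ring
    rw [Finset.sum_congr rfl fun m (_ : m ∈ Finset.univ) => h1 m, Finset.sum_add_distrib,
      Finset.sum_ite_eq Finset.univ k _]
    simp only [Finset.mem_univ, if_true]
    have h2 : ∑ m, -(wdb U j (fun y => Gam U h hi y i k m) x * h x m l)
        = -∑ m, wdb U j (fun y => Gam U h hi y i k m) x * h x m l := by simp
    rw [h2, hGamKey x hx i j k l]
    ring
  constructor
  · intro x hx i j
    have htr : ∑ k, ∑ l, hi x k l * h x k l = (n : ℂ) := by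
      rw [Finset.sum_comm]
      rw [Finset.sum_congr rfl fun l (_ : l ∈ Finset.univ) => hinv2 x hx l l]
      simp
    calc ∑ k, ∑ l, hi x k l * (∑ m, Rth U h hi θ x i j k m * h x m l)
        = ∑ k, ∑ l, (hi x k l * Th U h hi x i j k l
            - (t:ℂ) * (wd U i (fun y => (starRingEnd ℂ) (η y j)) x
                + wdb U j (fun y => η y i) x) * (hi x k l * h x k l)) := by
          refine Finset.sum_congr rfl fun k _ => Finset.sum_congr rfl fun l _ => ?_
          rw [hRhsum x hx i j k l]
          ring
      _ = (∑ k, ∑ l, hi x k l * Th U h hi x i j k l)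
          - (t:ℂ) * (wd U i (fun y => (starRingEnd ℂ) (η y j)) x
              + wdb U j (fun y => η y i) x) * ∑ k, ∑ l, hi x k l * h x k l := by
          simp only [Finset.sum_sub_distrib, ← Finset.mul_sum]
      _ = (∑ k, ∑ l, hi x k l * Th U h hi x i j k l)
          - (n : ℂ) * (t:ℂ) * (wd U i (fun y => (starRingEnd ℂ) (η y j)) x
              + wdb U j (fun y => η y i) x) := by
          rw [htr]; ring
  · rintro ⟨hd1, hd2⟩ x hx i j k l
    rw [hRhsum x hx i j k l]
    have h1 : wdb U j (fun y => η y i) x = 0 := hd2 x hx i j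
    have h2 : wd U i (fun y => (starRingEnd ℂ) (η y j)) x = 0 := by
      rw [wd_conj hU hx, hd2 x hx j i]
      simp
    rw [h1, h2]
    ring
end
end

section
/- The first Ricci curvature of the θ-modified Chern connection satisfies Ric^{(1)}(θ) = Θ^{(1)} - √-1 (∂ conj(θ₁) - ∂̄ θ₁), where θ₁ = θ_{ik}^k dz^i is the trace (1,0)-form of θ. -/
noncomputable section

open Complex

namespace TR

variable {n : ℕ} {U : Set (Fin n → ℂ)} {x : Fin n → ℂ} {f g : (Fin n → ℂ) → ℂ} {i : Fin n}

lemma wd_eq (hU : IsOpen U) (hx : x ∈ U) (i : Fin n) (f : (Fin n → ℂ) → ℂ) :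
    wd U i f x = (1/2) * (fderiv ℝ f x (Pi.single i 1)
      - Complex.I * fderiv ℝ f x (Pi.single i Complex.I)) := by
  rw [wd, fderivWithin_of_isOpen hU hx]

lemma wdb_eq (hU : IsOpen U) (hx : x ∈ U) (i : Fin n) (f : (Fin n → ℂ) → ℂ) :
    wdb U i f x = (1/2) * (fderiv ℝ f x (Pi.single i 1)
      + Complex.I * fderiv ℝ f x (Pi.single i Complex.I)) := by
  rw [wdb, fderivWithin_of_isOpen hU hx]

lemma wd_congr (hU : IsOpen U) (hx : x ∈ U) (hfg : ∀ y ∈ U, f y = g y) :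
    wd U i f x = wd U i g x := by
  rw [wd, wd, fderivWithin_congr hfg (hfg x hx)]

lemma wdb_congr (hU : IsOpen U) (hx : x ∈ U) (hfg : ∀ y ∈ U, f y = g y) :
    wdb U i f x = wdb U i g x := by
  rw [wdb, wdb, fderivWithin_congr hfg (hfg x hx)]

lemma wd_const (hU : IsOpen U) (hx : x ∈ U) (c : ℂ) :
    wd U i (fun _ => c) x = 0 := by
  rw [wd_eq hU hx]; simp

lemma wdb_const (hU : IsOpen U) (hx : x ∈ U) (c : ℂ) :
    wdb U i (fun _ => c) x = 0 := by
  rw [wdb_eq hU hx]; simp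

lemma wd_add (hU : IsOpen U) (hx : x ∈ U) (hf : DifferentiableAt ℝ f x)
    (hg : DifferentiableAt ℝ g x) :
    wd U i (fun y => f y + g y) x = wd U i f x + wd U i g x := by
  rw [wd_eq hU hx, wd_eq hU hx, wd_eq hU hx, fderiv_fun_add hf hg]
  simp only [ContinuousLinearMap.add_apply]; ring

lemma wdb_add (hU : IsOpen U) (hx : x ∈ U) (hf : DifferentiableAt ℝ f x)
    (hg : DifferentiableAt ℝ g x) :
    wdb U i (fun y => f y + g y) x = wdb U i f x + wdb U i g x := by
  rw [wdb_eq hU hx, wdb_eq hU hx, wdb_eq hU hx, fderiv_fun_add hf hg]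
  simp only [ContinuousLinearMap.add_apply]; ring

lemma wd_neg (hU : IsOpen U) (hx : x ∈ U) :
    wd U i (fun y => -f y) x = -wd U i f x := by
  rw [wd_eq hU hx, wd_eq hU hx, fderiv_fun_neg]
  simp only [ContinuousLinearMap.neg_apply]; ring

lemma wdb_neg (hU : IsOpen U) (hx : x ∈ U) :
    wdb U i (fun y => -f y) x = -wdb U i f x := by
  rw [wdb_eq hU hx, wdb_eq hU hx, fderiv_fun_neg]
  simp only [ContinuousLinearMap.neg_apply]; ring

lemma wd_mul (hU : IsOpen U) (hx : x ∈ U) (hf : DifferentiableAt ℝ f x)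
    (hg : DifferentiableAt ℝ g x) :
    wd U i (fun y => f y * g y) x = wd U i f x * g x + f x * wd U i g x := by
  rw [wd_eq hU hx, wd_eq hU hx, wd_eq hU hx, fderiv_fun_mul hf hg]
  simp only [ContinuousLinearMap.add_apply, ContinuousLinearMap.smul_apply, smul_eq_mul]; ring

lemma wdb_mul (hU : IsOpen U) (hx : x ∈ U) (hf : DifferentiableAt ℝ f x)
    (hg : DifferentiableAt ℝ g x) :
    wdb U i (fun y => f y * g y) x = wdb U i f x * g x + f x * wdb U i g x := by
  rw [wdb_eq hU hx, wdb_eq hU hx, wdb_eq hU hx, fderiv_fun_mul hf hg]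
  simp only [ContinuousLinearMap.add_apply, ContinuousLinearMap.smul_apply, smul_eq_mul]; ring

lemma wd_sum (hU : IsOpen U) (hx : x ∈ U) {ι : Type*} (s : Finset ι)
    (F : ι → (Fin n → ℂ) → ℂ) (hF : ∀ k ∈ s, DifferentiableAt ℝ (F k) x) :
    wd U i (fun y => ∑ k ∈ s, F k y) x = ∑ k ∈ s, wd U i (F k) x := by
  rw [wd_eq hU hx, fderiv_fun_sum hF]
  simp only [ContinuousLinearMap.sum_apply]
  rw [Finset.mul_sum, ← Finset.sum_sub_distrib, Finset.mul_sum]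
  exact Finset.sum_congr rfl fun k _ => by rw [wd_eq hU hx]

lemma wdb_sum (hU : IsOpen U) (hx : x ∈ U) {ι : Type*} (s : Finset ι)
    (F : ι → (Fin n → ℂ) → ℂ) (hF : ∀ k ∈ s, DifferentiableAt ℝ (F k) x) :
    wdb U i (fun y => ∑ k ∈ s, F k y) x = ∑ k ∈ s, wdb U i (F k) x := by
  rw [wdb_eq hU hx, fderiv_fun_sum hF]
  simp only [ContinuousLinearMap.sum_apply]
  rw [Finset.mul_sum, ← Finset.sum_add_distrib, Finset.mul_sum]
  exact Finset.sum_congr rfl fun k _ => by rw [wdb_eq hU hx]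




abbrev SM (U : Set (Fin n → ℂ)) (f : (Fin n → ℂ) → ℂ) : Prop := ContDiffOn ℝ ((⊤:ℕ∞) : WithTop ℕ∞) f U

lemma SM.diffAt (hf : SM U f) (hU : IsOpen U) (hx : x ∈ U) : DifferentiableAt ℝ f x :=
  (hf.contDiffAt (hU.mem_nhds hx)).differentiableAt (by simp)

lemma SM.mul (hf : SM U f) (hg : SM U g) : SM U (fun y => f y * g y) := ContDiffOn.mul hf hg

lemma SM.conj (hf : SM U f) : SM U (fun y => (starRingEnd ℂ) (f y)) :=
  (Complex.conjCLE : ℂ ≃L[ℝ] ℂ).contDiff.comp_contDiffOn hf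

lemma SM.sum {ι : Type*} {s : Finset ι} {F : ι → (Fin n → ℂ) → ℂ}
    (hF : ∀ k ∈ s, SM U (F k)) : SM U (fun y => ∑ k ∈ s, F k y) := ContDiffOn.sum hF

lemma SM.prod {ι : Type*} {s : Finset ι} {F : ι → (Fin n → ℂ) → ℂ}
    (hF : ∀ k ∈ s, SM U (F k)) : SM U (fun y => ∏ k ∈ s, F k y) := by
  classical
  induction s using Finset.induction with
  | empty => simpa using contDiffOn_const
  | @insert _ _ hne ih =>
    rename_i a s
    simp only [Finset.prod_insert hne]
    exact (hF a (Finset.mem_insert_self a s)).mul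
      (ih fun k hk => hF k (Finset.mem_insert_of_mem hk))

lemma SM.wd (hU : IsOpen U) (hf : SM U f) (i : Fin n) : SM U (fun y => wd U i f y) := by
  have h1 : ContDiffOn ℝ ((⊤:ℕ∞) : WithTop ℕ∞) (fderivWithin ℝ f U) U :=
    hf.fderivWithin hU.uniqueDiffOn (by exact_mod_cast le_top)
  unfold _root_.wd
  exact contDiffOn_const.mul ((h1.clm_apply contDiffOn_const).sub
    (contDiffOn_const.mul (h1.clm_apply contDiffOn_const)))

lemma SM.wdb (hU : IsOpen U) (hf : SM U f) (i : Fin n) : SM U (fun y => wdb U i f y) := by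
  have h1 : ContDiffOn ℝ ((⊤:ℕ∞) : WithTop ℕ∞) (fderivWithin ℝ f U) U :=
    hf.fderivWithin hU.uniqueDiffOn (by exact_mod_cast le_top)
  unfold _root_.wdb
  exact contDiffOn_const.mul ((h1.clm_apply contDiffOn_const).add
    (contDiffOn_const.mul (h1.clm_apply contDiffOn_const)))

lemma SM.det {A : (Fin n → ℂ) → Matrix (Fin n) (Fin n) ℂ}
    (hA : ∀ a b, SM U (fun y => A y a b)) : SM U (fun y => (A y).det) := by
  simp only [Matrix.det_apply']
  exact SM.sum fun σ _ => contDiffOn_const.mul (SM.prod fun k _ => hA (σ k) k)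

lemma hi_smooth (hU : IsOpen U) {h hi : (Fin n → ℂ) → Fin n → Fin n → ℂ}
    (hsm : ∀ i j, SM U (fun y => h y i j))
    (hinv1 : ∀ x ∈ U, ∀ j k, ∑ l, h x j l * hi x k l = if j = k then 1 else 0)
    (k l : Fin n) : SM U (fun y => hi y k l) := by
  classical
  set M : (Fin n → ℂ) → Matrix (Fin n) (Fin n) ℂ := fun y => Matrix.of (fun a b => h y a b) with hM
  have hright : ∀ y ∈ U, M y * Matrix.of (fun a b => hi y b a) = 1 := by
    intro y hy; ext a b
    simp only [Matrix.mul_apply, Matrix.one_apply, hM, Matrix.of_apply]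
    exact hinv1 y hy a b
  have hdet : ∀ y ∈ U, (M y).det ≠ 0 := fun y hy =>
    (Matrix.isUnit_det_of_right_inverse (hright y hy)).ne_zero
  have hval : ∀ y ∈ U, hi y k l = ((M y).det)⁻¹ * (M y).adjugate l k := by
    intro y hy
    have h1 : (M y)⁻¹ = Matrix.of (fun a b => hi y b a) := Matrix.inv_eq_right_inv (hright y hy)
    have h2 : hi y k l = (M y)⁻¹ l k := by rw [h1]; rfl
    rw [h2, Matrix.inv_def, Matrix.smul_apply, smul_eq_mul, Ring.inverse_eq_inv']
  have smdet : SM U (fun y => (M y).det) := SM.det (fun a b => hsm a b)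
  have smadj : SM U (fun y => (M y).adjugate l k) := by
    have e : ∀ y, (M y).adjugate l k = ((M y).updateRow k (Pi.single l 1)).det := fun y =>
      Matrix.adjugate_apply _ _ _
    simp only [e]
    apply SM.det
    intro a b
    simp only [Matrix.updateRow_apply]
    by_cases hak : a = k
    · simp only [hak, if_pos rfl]
      exact contDiffOn_const
    · simpa [hak, hM] using hsm a b
  exact ((smdet.inv hdet).mul smadj).congr hval

lemma wd_wdb_comm (hU : IsOpen U) (hx : x ∈ U) (hf : SM U f) (i j : Fin n) :
    wd U i (fun y => wdb U j f y) x = wdb U j (fun y => wd U i f y) x := by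
  have hx' := hU.mem_nhds hx
  have hfa : ContDiffAt ℝ ((⊤:ℕ∞) : WithTop ℕ∞) f x := hf.contDiffAt hx'
  have hdF : DifferentiableAt ℝ (fderiv ℝ f) x :=
    (hfa.fderiv_right (m := 1) (by simpa using WithTop.coe_le_coe.mpr (le_top : (1+1:ℕ∞) ≤ ⊤))).differentiableAt (by simp)
  have hsymm : IsSymmSndFDerivAt ℝ f x := hfa.isSymmSndFDerivAt (by simpa using WithTop.coe_le_coe.mpr (le_top : (2:ℕ∞) ≤ ⊤))
  have key : ∀ v w, fderiv ℝ (fun y => fderiv ℝ f y v) x w = fderiv ℝ (fderiv ℝ f) x w v := by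
    intro v w
    have h0 := fderiv_clm_apply (c := fderiv ℝ f) (u := fun _ => v) hdF (differentiableAt_const v)
    have h1 : fderiv ℝ (fun y => fderiv ℝ f y v) x
        = (fderiv ℝ f x).comp (fderiv ℝ (fun _ => v) x) + (fderiv ℝ (fderiv ℝ f) x).flip v := h0
    rw [h1]
    simp [ContinuousLinearMap.flip_apply]
  have hdv : ∀ v : Fin n → ℂ, DifferentiableAt ℝ (fun y => fderiv ℝ f y v) x := fun v =>
    hdF.clm_apply (differentiableAt_const v)
  have e1 : ∀ y ∈ U, wdb U j f y = (1/2) * (fderiv ℝ f y (Pi.single j 1)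
      + I * fderiv ℝ f y (Pi.single j I)) := fun y hy => wdb_eq hU hy j f
  have e2 : ∀ y ∈ U, wd U i f y = (1/2) * (fderiv ℝ f y (Pi.single i 1)
      - I * fderiv ℝ f y (Pi.single i I)) := fun y hy => wd_eq hU hy i f
  rw [wd_congr hU hx e1, wdb_congr hU hx e2, wd_eq hU hx, wdb_eq hU hx]
  have expand : ∀ (b : ℂ) (g1 g2 : (Fin n → ℂ) → ℂ), DifferentiableAt ℝ g1 x →
      DifferentiableAt ℝ g2 x → ∀ v, fderiv ℝ (fun y => (1/2 : ℂ) * (g1 y + b * g2 y)) x v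
        = (1/2) * (fderiv ℝ g1 x v + b * fderiv ℝ g2 x v) := by
    intro b g1 g2 h1 h2 v
    rw [fderiv_const_mul (a := fun y => g1 y + b * g2 y) (h1.add (h2.const_mul b)) ((1:ℂ)/2), fderiv_fun_add h1 (h2.const_mul b),
      fderiv_const_mul h2 b]
    simp only [ContinuousLinearMap.smul_apply, ContinuousLinearMap.add_apply, smul_eq_mul]
  have subexpand : ∀ (g1 g2 : (Fin n → ℂ) → ℂ), DifferentiableAt ℝ g1 x →
      DifferentiableAt ℝ g2 x → ∀ v, fderiv ℝ (fun y => (1/2 : ℂ) * (g1 y - I * g2 y)) x v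
        = (1/2) * (fderiv ℝ g1 x v - I * fderiv ℝ g2 x v) := by
    intro g1 g2 h1 h2 v
    rw [fderiv_const_mul (a := fun y => g1 y - I * g2 y) (h1.sub (h2.const_mul I)) ((1:ℂ)/2), fderiv_fun_sub h1 (h2.const_mul I),
      fderiv_const_mul h2 I]
    simp only [ContinuousLinearMap.smul_apply, ContinuousLinearMap.sub_apply, smul_eq_mul]
  rw [expand I _ _ (hdv _) (hdv _) (Pi.single i 1), expand I _ _ (hdv _) (hdv _) (Pi.single i I),
    subexpand _ _ (hdv _) (hdv _) (Pi.single j 1), subexpand _ _ (hdv _) (hdv _) (Pi.single j I)]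
  rw [key, key, key, key, key, key, key, key]
  rw [hsymm (Pi.single i 1) (Pi.single j 1), hsymm (Pi.single i 1) (Pi.single j I),
    hsymm (Pi.single i I) (Pi.single j 1), hsymm (Pi.single i I) (Pi.single j I)]
  ring

lemma sum_collapse {c : Fin n → ℂ} (l : Fin n) :
    (∑ q, (if l = q then (1:ℂ) else 0) * c q) = c l := by
  simp [ite_mul]

lemma wdb_hi (hU : IsOpen U) (hx : x ∈ U) {h hi : (Fin n → ℂ) → Fin n → Fin n → ℂ}
    (hsm : ∀ i j, SM U (fun y => h y i j))
    (his : ∀ k l, SM U (fun y => hi y k l))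
    (hinv1 : ∀ x ∈ U, ∀ j k, ∑ l, h x j l * hi x k l = if j = k then 1 else 0)
    (hinv2 : ∀ x ∈ U, ∀ l m, ∑ k, hi x k l * h x k m = if l = m then 1 else 0)
    (j k l : Fin n) :
    wdb U j (fun y => hi y k l) x
      = -∑ p, ∑ q, hi x p l * wdb U j (fun y => h y p q) x * hi x k q := by
  classical
  have z : ∀ m, ∑ q, h x m q * wdb U j (fun y => hi y k q) x
      = -∑ q, wdb U j (fun y => h y m q) x * hi x k q := by
    intro m
    have c1 : wdb U j (fun y => ∑ q, h y m q * hi y k q) x = 0 := by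
      rw [wdb_congr hU hx (fun y hy => hinv1 y hy m k)]
      exact wdb_const hU hx _
    rw [wdb_sum hU hx _ _ (fun q _ => ((hsm m q).mul (his k q)).diffAt hU hx)] at c1
    have c2 : ∑ q, (wdb U j (fun y => h y m q) x * hi x k q
        + h x m q * wdb U j (fun y => hi y k q) x) = 0 := by
      rw [← c1]
      exact Finset.sum_congr rfl fun q _ =>
        (wdb_mul hU hx ((hsm m q).diffAt hU hx) ((his k q).diffAt hU hx)).symm
    rw [Finset.sum_add_distrib] at c2
    linear_combination c2
  calc wdb U j (fun y => hi y k l) x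
      = ∑ q, (if l = q then (1:ℂ) else 0) * wdb U j (fun y => hi y k q) x :=
        (sum_collapse (c := fun q => wdb U j (fun y => hi y k q) x) l).symm
    _ = ∑ q, (∑ m, hi x m l * h x m q) * wdb U j (fun y => hi y k q) x := by
        exact Finset.sum_congr rfl fun q _ => by rw [hinv2 x hx l q]
    _ = ∑ m, hi x m l * ∑ q, h x m q * wdb U j (fun y => hi y k q) x := by
        simp only [Finset.sum_mul, Finset.mul_sum]
        rw [Finset.sum_comm]
        exact Finset.sum_congr rfl fun m _ => Finset.sum_congr rfl fun q _ => by ring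
    _ = ∑ m, hi x m l * (-∑ q, wdb U j (fun y => h y m q) x * hi x k q) :=
        Finset.sum_congr rfl fun m _ => by rw [z m]
    _ = -∑ p, ∑ q, hi x p l * wdb U j (fun y => h y p q) x * hi x k q := by
        rw [← Finset.sum_neg_distrib]
        refine Finset.sum_congr rfl fun p _ => ?_
        rw [mul_neg, Finset.mul_sum]
        congr 1
        exact Finset.sum_congr rfl fun q _ => by ring

lemma sum4 (F : Fin n → Fin n → Fin n → Fin n → ℂ) :
    ∑ k, ∑ l, ∑ p, ∑ q, F k l p q = ∑ k, ∑ l, ∑ p, ∑ q, F k q p l := by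
  refine Finset.sum_congr rfl fun k _ => ?_
  rw [Finset.sum_comm]
  conv_rhs => rw [Finset.sum_comm]
  refine Finset.sum_congr rfl fun p _ => ?_
  rw [Finset.sum_comm]

end TR

/-- the first Ricci curvature of the θ-modified Chern connection satisfies
`Ric^{(1)}(θ) = Θ^{(1)} - √-1 (∂ conj(θ₁) - ∂̄ θ₁)` where `θ₁ = θ_{ik}^k dz^i`,
at the level of coefficients of `dz^i ∧ dz̄^j`:
`h^{k\bar ℓ} R^θ_{i\bar j k\bar ℓ} = h^{k\bar ℓ} Θ_{i\bar j k\bar ℓ}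
   - (∂_i conj((θ₁)_j) + ∂̄_j (θ₁)_i)`. -/
theorem theta_first_ricci_formula
    {n : ℕ} (U : Set (Fin n → ℂ)) (hU : IsOpen U)
    (h hi : (Fin n → ℂ) → Fin n → Fin n → ℂ)
    (hsm : ∀ i j, ContDiffOn ℝ (⊤ : ℕ∞) (fun y => h y i j) U)
    (hherm : ∀ x ∈ U, ∀ i j, h x i j = (starRingEnd ℂ) (h x j i))
    (hpos : ∀ x ∈ U, ∀ v : Fin n → ℂ, v ≠ 0 →
      0 < (∑ i, ∑ j, h x i j * v i * (starRingEnd ℂ) (v j)).re)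
    (hinv1 : ∀ x ∈ U, ∀ j k, ∑ l, h x j l * hi x k l = if j = k then 1 else 0)
    (hinv2 : ∀ x ∈ U, ∀ l m, ∑ k, hi x k l * h x k m = if l = m then 1 else 0)
    (θ : (Fin n → ℂ) → Fin n → Fin n → Fin n → ℂ)
    (hθsm : ∀ i j k, ContDiffOn ℝ (⊤ : ℕ∞) (fun y => θ y i j k) U) :
    ∀ x ∈ U, ∀ i j,
      (∑ k, ∑ l, hi x k l * (∑ m, Rth U h hi θ x i j k m * h x m l))
        = (∑ k, ∑ l, hi x k l * Th U h hi x i j k l)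
          - (wd U i (fun y => (starRingEnd ℂ) (∑ k, θ y j k k)) x
              + wdb U j (fun y => ∑ k, θ y i k k) x) := by
  classical
  intro x hx i j
  have hsm' : ∀ a b, TR.SM U (fun y => h y a b) := fun a b => (hsm a b).of_le (by simp)
  have hθ' : ∀ a b c, TR.SM U (fun y => θ y a b c) := fun a b c => (hθsm a b c).of_le (by simp)
  have his : ∀ k l, TR.SM U (fun y => hi y k l) := fun k l => TR.hi_smooth hU hsm' hinv1 k l
  have smG : ∀ a b c, TR.SM U (fun y => Gam U h hi y a b c) := by
    intro a b c
    unfold Gam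
    exact TR.SM.sum fun l _ => ((his c l).mul ((hsm' b l).wd hU a))
  have smB : ∀ a b c, TR.SM U (fun y => Bth h hi θ y a b c) := by
    intro a b c
    unfold Bth
    exact ContDiffOn.neg (TR.SM.sum fun p _ => TR.SM.sum fun q _ =>
      (((hsm' b q).mul (his c p)).mul (TR.SM.conj (hθ' a p q))))
  -- T1 : collapse the metric contraction to a trace
  have T1 : (∑ k, ∑ l, hi x k l * (∑ m, Rth U h hi θ x i j k m * h x m l))
      = ∑ k, Rth U h hi θ x i j k k := by
    refine Finset.sum_congr rfl fun k _ => ?_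
    calc (∑ l, hi x k l * ∑ m, Rth U h hi θ x i j k m * h x m l)
        = ∑ l, ∑ m, Rth U h hi θ x i j k m * (hi x k l * h x m l) := by
          refine Finset.sum_congr rfl fun l _ => ?_
          rw [Finset.mul_sum]
          exact Finset.sum_congr rfl fun m _ => by ring
      _ = ∑ m, ∑ l, Rth U h hi θ x i j k m * (hi x k l * h x m l) := Finset.sum_comm
      _ = ∑ m, Rth U h hi θ x i j k m * (if m = k then (1:ℂ) else 0) := by
          refine Finset.sum_congr rfl fun m _ => ?_
          rw [← Finset.mul_sum]
          congr 1
          rw [← hinv1 x hx m k]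
          exact Finset.sum_congr rfl fun l _ => by ring
      _ = Rth U h hi θ x i j k k := by
          simp [mul_ite]
  -- T2 : the quadratic terms cancel in the trace
  have eR : ∀ k, Rth U h hi θ x i j k k
      = wd U i (fun y => Bth h hi θ y j k k) x - wdb U j (fun y => Ath U h hi θ y i k k) x
        - (∑ s, Ath U h hi θ x i k s * Bth h hi θ x j s k)
        + ∑ s, Bth h hi θ x j k s * Ath U h hi θ x i s k := fun k => by
    simp only [Rth]; ring
  have T2 : ∑ k, Rth U h hi θ x i j k k
      = (∑ k, wd U i (fun y => Bth h hi θ y j k k) x)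
        - ∑ k, wdb U j (fun y => Ath U h hi θ y i k k) x := by
    have cancel : (∑ k, ∑ s, Ath U h hi θ x i k s * Bth h hi θ x j s k)
        = ∑ k, ∑ s, Bth h hi θ x j k s * Ath U h hi θ x i s k := by
      rw [Finset.sum_comm]
      exact Finset.sum_congr rfl fun k _ => Finset.sum_congr rfl fun s _ => mul_comm _ _
    calc ∑ k, Rth U h hi θ x i j k k
        = ∑ k, (wd U i (fun y => Bth h hi θ y j k k) x
            - wdb U j (fun y => Ath U h hi θ y i k k) x
            - (∑ s, Ath U h hi θ x i k s * Bth h hi θ x j s k)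
            + ∑ s, Bth h hi θ x j k s * Ath U h hi θ x i s k) :=
          Finset.sum_congr rfl fun k _ => eR k
      _ = _ := by
          rw [Finset.sum_add_distrib, Finset.sum_sub_distrib, Finset.sum_sub_distrib, cancel]
          ring
  -- T3 : the trace of B is -conj θ₁
  have hBsum : ∀ y ∈ U, (∑ k, Bth h hi θ y j k k)
      = -((starRingEnd ℂ) (∑ k, θ y j k k)) := by
    intro y hy
    have e1 : ∀ k, Bth h hi θ y j k k
        = -∑ p, ∑ q, h y k q * hi y k p * (starRingEnd ℂ) (θ y j p q) := fun k => rfl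
    calc ∑ k, Bth h hi θ y j k k
        = -∑ k, ∑ p, ∑ q, h y k q * hi y k p * (starRingEnd ℂ) (θ y j p q) := by
          rw [← Finset.sum_neg_distrib]
          exact Finset.sum_congr rfl fun k _ => e1 k
      _ = -∑ p, ∑ q, (∑ k, hi y k p * h y k q) * (starRingEnd ℂ) (θ y j p q) := by
          congr 1
          rw [Finset.sum_comm]
          refine Finset.sum_congr rfl fun p _ => ?_
          rw [Finset.sum_comm]
          refine Finset.sum_congr rfl fun q _ => ?_
          rw [Finset.sum_mul]
          exact Finset.sum_congr rfl fun k _ => by ring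
      _ = -∑ p, ∑ q, (if p = q then (1:ℂ) else 0) * (starRingEnd ℂ) (θ y j p q) := by
          congr 1
          exact Finset.sum_congr rfl fun p _ => Finset.sum_congr rfl fun q _ => by
            rw [hinv2 y hy p q]
      _ = -∑ p, (starRingEnd ℂ) (θ y j p p) := by
          congr 1
          exact Finset.sum_congr rfl fun p _ =>
            TR.sum_collapse (c := fun q => (starRingEnd ℂ) (θ y j p q)) p
      _ = -((starRingEnd ℂ) (∑ k, θ y j k k)) := by rw [map_sum]
  have T3 : ∑ k, wd U i (fun y => Bth h hi θ y j k k) x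
      = -(wd U i (fun y => (starRingEnd ℂ) (∑ k, θ y j k k)) x) := by
    rw [← TR.wd_sum hU hx Finset.univ _ (fun k _ => (smB j k k).diffAt hU hx)]
    rw [TR.wd_congr hU hx (g := fun y => -((starRingEnd ℂ) (∑ k, θ y j k k))) hBsum]
    exact TR.wd_neg hU hx (f := fun y => (starRingEnd ℂ) (∑ k, θ y j k k))
  -- T4 : split A into Gam and θ parts
  have T4 : ∑ k, wdb U j (fun y => Ath U h hi θ y i k k) x
      = (∑ k, wdb U j (fun y => Gam U h hi y i k k) x)
        + wdb U j (fun y => ∑ k, θ y i k k) x := by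
    rw [TR.wdb_sum hU hx Finset.univ _ (fun k _ => (hθ' i k k).diffAt hU hx),
      ← Finset.sum_add_distrib]
    refine Finset.sum_congr rfl fun k _ => ?_
    have e : (fun y => Ath U h hi θ y i k k) = fun y => Gam U h hi y i k k + θ y i k k := rfl
    rw [e]
    exact TR.wdb_add hU hx ((smG i k k).diffAt hU hx) ((hθ' i k k).diffAt hU hx)
  -- T5 : the core identity on the Chern part
  have step1 : ∀ k, wdb U j (fun y => Gam U h hi y i k k) x
      = ∑ l, (wdb U j (fun y => hi y k l) x * wd U i (fun w => h w k l) x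
          + hi x k l * wd U i (fun y => wdb U j (fun w => h w k l) y) x) := by
    intro k
    have e0 : (fun y => Gam U h hi y i k k)
        = fun y => ∑ l, hi y k l * wd U i (fun w => h w k l) y := rfl
    rw [e0, TR.wdb_sum hU hx Finset.univ _
      (fun l _ => ((his k l).mul ((hsm' k l).wd hU i)).diffAt hU hx)]
    refine Finset.sum_congr rfl fun l _ => ?_
    rw [TR.wdb_mul hU hx ((his k l).diffAt hU hx) (((hsm' k l).wd hU i).diffAt hU hx)]
    rw [← TR.wd_wdb_comm hU hx (hsm' k l) i j]
  have ehi : ∀ k l, wdb U j (fun y => hi y k l) x * wd U i (fun w => h w k l) x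
      = -∑ p, ∑ q, hi x p l * wdb U j (fun y => h y p q) x * hi x k q
          * wd U i (fun w => h w k l) x := by
    intro k l
    rw [TR.wdb_hi hU hx hsm' his hinv1 hinv2 j k l, neg_mul, Finset.sum_mul]
    congr 1
    refine Finset.sum_congr rfl fun p _ => ?_
    rw [Finset.sum_mul]
  have tsplit : ∀ k l, hi x k l * Th U h hi x i j k l
      = -(hi x k l * wd U i (fun y => wdb U j (fun w => h w k l) y) x)
        + ∑ p, ∑ q, hi x k l * (hi x p q * wdb U j (fun y => h y p l) x
            * wd U i (fun y => h y k q) x) := by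
    intro k l
    simp only [Th]
    rw [mul_add, mul_neg]
    congr 1
    rw [Finset.mul_sum]
    exact Finset.sum_congr rfl fun p _ => by rw [Finset.mul_sum]
  have ThSplit : ∑ k, ∑ l, hi x k l * Th U h hi x i j k l
      = -(∑ k, ∑ l, hi x k l * wd U i (fun y => wdb U j (fun w => h w k l) y) x)
        + ∑ k, ∑ l, ∑ p, ∑ q, hi x k l * (hi x p q * wdb U j (fun y => h y p l) x
            * wd U i (fun y => h y k q) x) := by
    calc ∑ k, ∑ l, hi x k l * Th U h hi x i j k l
        = ∑ k, ∑ l, (-(hi x k l * wd U i (fun y => wdb U j (fun w => h w k l) y) x)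
            + ∑ p, ∑ q, hi x k l * (hi x p q * wdb U j (fun y => h y p l) x
                * wd U i (fun y => h y k q) x)) :=
          Finset.sum_congr rfl fun k _ => Finset.sum_congr rfl fun l _ => tsplit k l
      _ = _ := by
          simp only [Finset.sum_add_distrib, Finset.sum_neg_distrib]
  have T5 : ∑ k, wdb U j (fun y => Gam U h hi y i k k) x
      = -∑ k, ∑ l, hi x k l * Th U h hi x i j k l := by
    calc ∑ k, wdb U j (fun y => Gam U h hi y i k k) x
        = ∑ k, ∑ l, (wdb U j (fun y => hi y k l) x * wd U i (fun w => h w k l) x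
            + hi x k l * wd U i (fun y => wdb U j (fun w => h w k l) y) x) :=
          Finset.sum_congr rfl fun k _ => step1 k
      _ = (∑ k, ∑ l, wdb U j (fun y => hi y k l) x * wd U i (fun w => h w k l) x)
          + ∑ k, ∑ l, hi x k l * wd U i (fun y => wdb U j (fun w => h w k l) y) x := by
          simp only [Finset.sum_add_distrib]
      _ = (-∑ k, ∑ l, ∑ p, ∑ q, hi x p l * wdb U j (fun y => h y p q) x * hi x k q
              * wd U i (fun w => h w k l) x)
          + ∑ k, ∑ l, hi x k l * wd U i (fun y => wdb U j (fun w => h w k l) y) x := by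
          congr 1
          calc ∑ k, ∑ l, wdb U j (fun y => hi y k l) x * wd U i (fun w => h w k l) x
              = ∑ k, ∑ l, (-∑ p, ∑ q, hi x p l * wdb U j (fun y => h y p q) x * hi x k q
                  * wd U i (fun w => h w k l) x) :=
                Finset.sum_congr rfl fun k _ => Finset.sum_congr rfl fun l _ => ehi k l
            _ = _ := by simp only [Finset.sum_neg_distrib]
      _ = (-∑ k, ∑ l, ∑ p, ∑ q, hi x k l * (hi x p q * wdb U j (fun y => h y p l) x
              * wd U i (fun y => h y k q) x))
          + ∑ k, ∑ l, hi x k l * wd U i (fun y => wdb U j (fun w => h w k l) y) x := by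
          congr 1
          rw [TR.sum4 (fun k l p q => hi x p l * wdb U j (fun y => h y p q) x * hi x k q
            * wd U i (fun w => h w k l) x)]
          congr 1
          exact Finset.sum_congr rfl fun k _ => Finset.sum_congr rfl fun l _ =>
            Finset.sum_congr rfl fun p _ => Finset.sum_congr rfl fun q _ => by ring
      _ = -∑ k, ∑ l, hi x k l * Th U h hi x i j k l := by
          rw [ThSplit]
          ring
  rw [T1, T2, T3, T4, T5]
  ring
end
end
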